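/- arXiv:2605.15531 — 4 statements merged into one kernel-verified Lean document; each statement's English description precedes it below -/
import Mathlib

section
/- Let Φ be a Gaussian mixture density with k components in ℝ^d, with weights α_i, means μ_i, and covariance matrices Σ_i. Then the critical set Crit(Φ) is contained in the set M = { (∑_{i=1}^k w_i Σ_i^{-1})^{-1} (∑_{i=1}^k w_i Σ_i^{-1} μ_i) : w ∈ Δ_k }, where Δ_k = { w ∈ [0,1]^k : ∑_{i=1}^k w_i = 1 } is the probability simplex; in particular, Crit(Φ) is compact. -/
open scoped BigOperators RealInnerProductSpace
open Matrix

/-- The density of a (nondegenerate) Gaussian with mean `μ` and covariance matrix `S`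
on the Euclidean space indexed by `ι`. -/
noncomputable def gaussianPdf {ι : Type*} [Fintype ι] [DecidableEq ι]
    (μ : EuclideanSpace ℝ ι) (S : Matrix ι ι ℝ) (x : EuclideanSpace ℝ ι) : ℝ :=
  (2 * Real.pi) ^ (-(Fintype.card ι : ℝ) / 2) * S.det ^ (-(1 : ℝ) / 2) *
    Real.exp (-(1 / 2 : ℝ) * ((fun i => x i - μ i) ⬝ᵥ (S⁻¹ *ᵥ (fun i => x i - μ i))))

/-- A `k`-component Gaussian mixture density. -/
noncomputable def mixturePdf {ι : Type*} [Fintype ι] [DecidableEq ι] {k : ℕ}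
    (α : Fin k → ℝ) (μ : Fin k → EuclideanSpace ℝ ι) (S : Fin k → Matrix ι ι ℝ)
    (x : EuclideanSpace ℝ ι) : ℝ :=
  ∑ i, α i * gaussianPdf (μ i) (S i) x

/-- `Φ` is a Gaussian mixture density with weights `α`, means `μ`,
and (positive definite) covariance matrices `S`. -/
def IsGaussianMixture {ι : Type*} [Fintype ι] [DecidableEq ι] {k : ℕ}
    (Φ : EuclideanSpace ℝ ι → ℝ) (α : Fin k → ℝ) (μ : Fin k → EuclideanSpace ℝ ι)
    (S : Fin k → Matrix ι ι ℝ) : Prop :=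
  (∀ i, 0 < α i) ∧ (∑ i, α i) = 1 ∧ (∀ i, (S i).PosDef) ∧
    ∀ x, Φ x = mixturePdf α μ S x

/-- The Hessian matrix of `f : ℝ^ι → ℝ` at `x`. -/
noncomputable def hessianMatrix {ι : Type*} [Fintype ι] [DecidableEq ι]
    (f : EuclideanSpace ℝ ι → ℝ) (x : EuclideanSpace ℝ ι) : Matrix ι ι ℝ :=
  Matrix.of fun i j =>
    iteratedFDeriv ℝ 2 f x ![EuclideanSpace.single i 1, EuclideanSpace.single j 1]

/-!
At `x` the gradient of `Φ = ∑ αᵢ φᵢ` is `-∑ αᵢ φᵢ(x) Σᵢ⁻¹ (x - μᵢ)`. At a critical point the weights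
`αᵢ φᵢ(x)` are positive, so normalising them gives `w ∈ Δₖ` with
`(∑ wᵢ Σᵢ⁻¹) x = ∑ wᵢ Σᵢ⁻¹ μᵢ`; as `∑ wᵢ Σᵢ⁻¹` is positive definite for every `w ∈ Δₖ`, this solves
for `x`. Hence `Crit(Φ)` lies in the image of the compact simplex under a map continuous on it, and
it is closed because `∇Φ` is continuous.
-/

open InnerProductSpace

section Gaussian

variable {ι : Type*} [Fintype ι] [DecidableEq ι]

theorem dotProduct_mulVec_ofLp_self (A : Matrix ι ι ℝ) (v : EuclideanSpace ℝ ι) :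
    v.ofLp ⬝ᵥ A *ᵥ v.ofLp = (toEuclideanCLM (𝕜 := ℝ) A).reApplyInnerSelf v := by
  rw [ContinuousLinearMap.reApplyInnerSelf_apply, real_inner_comm, inner_toEuclideanCLM]
  rfl

theorem gaussianPdf_eq_mul_exp (m : EuclideanSpace ℝ ι) (S : Matrix ι ι ℝ)
    (x : EuclideanSpace ℝ ι) :
    gaussianPdf m S x = gaussianPdf m S m *
      Real.exp (-(1 / 2) * (toEuclideanCLM (𝕜 := ℝ) S⁻¹).reApplyInnerSelf (x - m)) := by
  have hquad (y : EuclideanSpace ℝ ι) : ((fun i => y i - m i) ⬝ᵥ S⁻¹ *ᵥ fun i => y i - m i) =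
      (toEuclideanCLM (𝕜 := ℝ) S⁻¹).reApplyInnerSelf (y - m) :=
    dotProduct_mulVec_ofLp_self _ (y - m)
  simp [gaussianPdf, hquad]

theorem gaussianPdf_pos (m : EuclideanSpace ℝ ι) {S : Matrix ι ι ℝ} (hS : 0 < S.det)
    (x : EuclideanSpace ℝ ι) : 0 < gaussianPdf m S x := by
  unfold gaussianPdf
  positivity

theorem hasGradientAt_gaussianPdf (m : EuclideanSpace ℝ ι) {S : Matrix ι ι ℝ}
    (hS : S.IsHermitian) (x : EuclideanSpace ℝ ι) :
    HasGradientAt (gaussianPdf m S)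
      (-gaussianPdf m S x • toEuclideanCLM (𝕜 := ℝ) S⁻¹ (x - m)) x := by
  have hsymm : ((toEuclideanCLM (𝕜 := ℝ) S⁻¹ : EuclideanSpace ℝ ι →L[ℝ] EuclideanSpace ℝ ι) :
      EuclideanSpace ℝ ι →ₗ[ℝ] EuclideanSpace ℝ ι).IsSymmetric := by
    rw [coe_toEuclideanCLM_eq_toEuclideanLin]
    exact isSymmetric_toEuclideanLin_iff.mpr hS.inv
  have hquad := (hsymm.hasStrictFDerivAt_reApplyInnerSelf (x - m)).hasFDerivAt.comp x
    ((hasFDerivAt_id x).sub_const m)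
  have h := ((hquad.const_mul (-(1 / 2) : ℝ)).exp).const_mul (gaussianPdf m S m)
  rw [hasGradientAt_iff_hasFDerivAt, funext (gaussianPdf_eq_mul_exp m S)]
  refine h.congr_fderiv ?_
  ext y
  simp only [ContinuousLinearMap.comp_id, _root_.smul_apply, coe_innerSL_apply,
    toDual_apply_apply, real_inner_smul_left, Function.comp_apply, id, smul_eq_mul, nsmul_eq_mul]
  ring

end Gaussian

section PrecisionWeightedMean

variable {ι n : Type*} [Fintype ι]

noncomputable def precisionWeightedMean [Fintype n] [DecidableEq n] {K : Type*} [Field K]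
    (P : ι → Matrix n n K) (m : ι → n → K) (w : ι → K) : n → K :=
  (∑ i, w i • P i)⁻¹ *ᵥ ∑ i, w i • (P i *ᵥ m i)

theorem eq_precisionWeightedMean_of_sum_smul_mulVec_sub_eq_zero [Fintype n] [DecidableEq n]
    {K : Type*} [Field K] {P : ι → Matrix n n K} {m : ι → n → K} {w : ι → K} {x : n → K}
    (hdet : IsUnit (∑ i, w i • P i).det) (hx : ∑ i, w i • (P i *ᵥ (x - m i)) = 0) :
    x = precisionWeightedMean P m w := by
  have hnormal : (∑ i, w i • P i) *ᵥ x = ∑ i, w i • (P i *ᵥ m i) := by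
    simpa [sum_mulVec, smul_mulVec, mulVec_sub, smul_sub, sub_eq_zero] using hx
  rw [precisionWeightedMean, ← hnormal, mulVec_mulVec, nonsing_inv_mul _ hdet, one_mulVec]

theorem posDef_sum_smul_of_mem_stdSimplex {P : ι → Matrix n n ℝ} (hP : ∀ i, (P i).PosDef)
    {w : ι → ℝ} (hw : w ∈ stdSimplex ℝ ι) : (∑ i, w i • P i).PosDef := by
  classical
  obtain ⟨hw_nonneg, hw_sum⟩ := hw
  have hsupport : (Finset.univ.filter fun i => w i ≠ 0).Nonempty := by
    obtain ⟨i, -, hi⟩ := Finset.exists_ne_zero_of_sum_ne_zero (hw_sum ▸ one_ne_zero)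
    exact ⟨i, by simpa using hi⟩
  rw [← Finset.sum_filter_of_ne fun i _ h => left_ne_zero_of_smul h]
  exact posDef_sum hsupport fun i hi =>
    (hP i).smul (lt_of_le_of_ne (hw_nonneg i) (Finset.mem_filter.mp hi).2.symm)

theorem continuousOn_precisionWeightedMean [Fintype n] [DecidableEq n] {P : ι → Matrix n n ℝ}
    (hP : ∀ i, (P i).PosDef) (m : ι → n → ℝ) :
    ContinuousOn (precisionWeightedMean P m) (stdSimplex ℝ ι) := by
  intro w hw
  have hinv : ContinuousAt (fun v : ι → ℝ => (∑ i, v i • P i)⁻¹) w := by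
    refine (continuousAt_matrix_inv _ ?_).comp
      (continuous_finsetSum _ fun i _ => by fun_prop).continuousAt
    rw [Ring.inverse_eq_inv']
    exact continuousAt_inv₀ (posDef_sum_smul_of_mem_stdSimplex hP hw).det_pos.ne'
  have hrhs : Continuous fun v : ι → ℝ => ∑ i, v i • (P i *ᵥ m i) :=
    continuous_finsetSum _ fun i _ => by fun_prop
  exact ((continuous_fst.matrix_mulVec continuous_snd).continuousAt.comp
    (hinv.prodMk hrhs.continuousAt)).continuousWithinAt

theorem exists_mem_stdSimplex_sum_smul_eq_zero {E : Type*} [AddCommGroup E] [Module ℝ E]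
    [Nonempty ι] {β : ι → ℝ} (hβ : ∀ i, 0 < β i) {v : ι → E} (hv : ∑ i, β i • v i = 0) :
    ∃ w ∈ stdSimplex ℝ ι, ∑ i, w i • v i = 0 := by
  have htotal : 0 < ∑ i, β i := Finset.sum_pos (fun i _ => hβ i) Finset.univ_nonempty
  refine ⟨fun i => (∑ j, β j)⁻¹ * β i, ⟨fun i => mul_nonneg (inv_nonneg.2 htotal.le) (hβ i).le,
    by rw [← Finset.mul_sum, inv_mul_cancel₀ htotal.ne']⟩, ?_⟩
  simp only [mul_smul, ← Finset.smul_sum, hv, smul_zero]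

end PrecisionWeightedMean

section Mixture

variable {ι : Type*} [Fintype ι] [DecidableEq ι] {k : ℕ}

theorem hasGradientAt_mixturePdf (α : Fin k → ℝ) (μ : Fin k → EuclideanSpace ℝ ι)
    {S : Fin k → Matrix ι ι ℝ} (hS : ∀ i, (S i).IsHermitian) (x : EuclideanSpace ℝ ι) :
    HasGradientAt (mixturePdf α μ S)
      (-∑ i, (α i * gaussianPdf (μ i) (S i) x) • toEuclideanCLM (𝕜 := ℝ) (S i)⁻¹ (x - μ i)) x := by
  have h := HasFDerivAt.fun_sum (u := Finset.univ) fun i _ =>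
    (hasGradientAt_gaussianPdf (μ i) (hS i) x).hasFDerivAt.const_mul (α i)
  rw [hasGradientAt_iff_hasFDerivAt]
  refine h.congr_fderiv ?_
  simp [mul_smul]

theorem continuous_gradient_mixturePdf (α : Fin k → ℝ) (μ : Fin k → EuclideanSpace ℝ ι)
    {S : Fin k → Matrix ι ι ℝ} (hS : ∀ i, (S i).IsHermitian) :
    Continuous (gradient (mixturePdf α μ S)) := by
  have hφ (i : Fin k) : Continuous (gaussianPdf (μ i) (S i)) :=
    Differentiable.continuous fun x => (hasGradientAt_gaussianPdf (μ i) (hS i) x).differentiableAt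
  rw [gradient_eq (hasGradientAt_mixturePdf α μ hS)]
  exact (continuous_finsetSum _ fun i _ => by fun_prop).neg

theorem exists_mem_stdSimplex_of_gradient_mixturePdf_eq_zero [NeZero k] {α : Fin k → ℝ}
    (hα : ∀ i, 0 < α i) (μ : Fin k → EuclideanSpace ℝ ι) {S : Fin k → Matrix ι ι ℝ}
    (hS : ∀ i, (S i).PosDef) {x : EuclideanSpace ℝ ι} (hx : gradient (mixturePdf α μ S) x = 0) :
    ∃ w ∈ stdSimplex ℝ (Fin k),
      x.ofLp = precisionWeightedMean (fun i => (S i)⁻¹) (fun i => (μ i).ofLp) w := by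
  rw [(hasGradientAt_mixturePdf α μ (fun i => (hS i).isHermitian) x).gradient, neg_eq_zero] at hx
  obtain ⟨w, hw, hwx⟩ := exists_mem_stdSimplex_sum_smul_eq_zero
    (fun i => mul_pos (hα i) (gaussianPdf_pos (μ i) (hS i).det_pos x)) hx
  refine ⟨w, hw, eq_precisionWeightedMean_of_sum_smul_mulVec_sub_eq_zero
    (posDef_sum_smul_of_mem_stdSimplex (fun i => (hS i).inv) hw).det_pos.ne'.isUnit ?_⟩
  simpa [mulVec_sub] using congrArg WithLp.ofLp hwx

end Mixture

/-- Lemma: compact containment of the critical set.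
For a Gaussian mixture density $Φ$, the critical set $\mathrm{Crit}(Φ)$ is contained in
$\{ (\sum_i w_i Σ_i^{-1})^{-1}(\sum_i w_i Σ_i^{-1} μ_i) : w ∈ Δ_k \}$, and is compact. -/
theorem crit_subset_simplex_image_and_compact
    {d k : ℕ} (α : Fin k → ℝ) (μ : Fin k → EuclideanSpace ℝ (Fin d))
    (S : Fin k → Matrix (Fin d) (Fin d) ℝ)
    (Φ : EuclideanSpace ℝ (Fin d) → ℝ)
    (hΦ : IsGaussianMixture Φ α μ S) :
    {x : EuclideanSpace ℝ (Fin d) | gradient Φ x = 0} ⊆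
      {x : EuclideanSpace ℝ (Fin d) | ∃ w : Fin k → ℝ,
        (∀ i, 0 ≤ w i ∧ w i ≤ 1) ∧ (∑ i, w i) = 1 ∧
        ∀ j, x j = ((∑ i, w i • (S i)⁻¹)⁻¹ *ᵥ
          (∑ i, w i • ((S i)⁻¹ *ᵥ (fun l => μ i l)))) j} ∧
    IsCompact {x : EuclideanSpace ℝ (Fin d) | gradient Φ x = 0} := by
  obtain ⟨hα, hα_sum, hS, hΦ⟩ := hΦ
  obtain rfl : Φ = mixturePdf α μ S := funext hΦ
  clear hΦ
  have : NeZero k := ⟨by rintro rfl; simp at hα_sum⟩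
  set mean := fun w =>
    WithLp.toLp 2 (precisionWeightedMean (fun i => (S i)⁻¹) (fun i => (μ i).ofLp) w)
  have hcrit : {x | gradient (mixturePdf α μ S) x = 0} ⊆ mean '' stdSimplex ℝ (Fin k) := by
    intro x hx
    obtain ⟨w, hw, hxw⟩ := exists_mem_stdSimplex_of_gradient_mixturePdf_eq_zero hα μ hS hx
    exact ⟨w, hw, congrArg (WithLp.toLp 2) hxw.symm⟩
  refine ⟨hcrit.trans ?_, ?_⟩
  · rintro _ ⟨w, hw, rfl⟩
    exact ⟨w, fun i => mem_Icc_of_mem_stdSimplex hw i, hw.2, fun j => rfl⟩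
  · have hclosed := isClosed_eq (continuous_gradient_mixturePdf α μ fun i => (hS i).isHermitian)
      (continuous_const (y := 0))
    have hmean := (PiLp.continuous_toLp 2 _).comp_continuousOn
      (continuousOn_precisionWeightedMean (fun i => (hS i).inv) fun i => (μ i).ofLp)
    exact ((isCompact_stdSimplex ℝ _).image_of_continuousOn hmean).of_isClosed_subset hclosed hcrit
end

section
/- Let Φ be a Gaussian mixture density with k components in ℝ^d. If the modal set Mode(Φ) is infinite, then Φ has a degenerate critical point, i.e. there exists x with ∇Φ(x) = 0 and det D²Φ(x) = 0. -/
open scoped BigOperators RealInnerProductSpace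
open Matrix

/-!
Every component of `Φ` is a positive multiple of `exp (-q / 2)` with `q` a convex quadratic.
If every `q` is larger at `x` than at `0`, convexity makes every component strictly larger on
the segment `[0, x)` than at `x`, so `x` is not a mode: the modes lie in the union of the
bounded sets `{q ≤ q 0}`. Infinitely many modes therefore accumulate at some `x₀`, a critical
point by continuity of `DΦ`. A nonsingular Hessian at `x₀` would make `DΦ` anti-Lipschitz to
first order at `x₀`, hence `DΦ ≠ 0` on a punctured neighbourhood of `x₀`, contradicting the
accumulation.
-/

open Set Filter Topology

theorem exists_pos_mul_sq_norm_le {E : Type*} [NormedAddCommGroup E] [NormedSpace ℝ E]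
    [FiniteDimensional ℝ E] {q : E → ℝ} (hq : Continuous q)
    (hsmul : ∀ (t : ℝ) v, q (t • v) = t ^ 2 * q v) (hpos : ∀ v ≠ 0, 0 < q v) :
    ∃ c > 0, ∀ v, c * ‖v‖ ^ 2 ≤ q v := by
  rcases subsingleton_or_nontrivial E with _ | _
  · exact ⟨1, one_pos, fun v => by simpa [Subsingleton.elim v 0] using (hsmul 0 0).ge⟩
  obtain ⟨u, hu, hmin⟩ := (isCompact_sphere (0 : E) 1).exists_isMinOn
    (NormedSpace.sphere_nonempty.2 zero_le_one) hq.continuousOn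
  refine ⟨q u, hpos u (ne_zero_of_mem_unit_sphere ⟨u, hu⟩), fun v => ?_⟩
  rcases eq_or_ne v 0 with rfl | hv
  · simpa using (hsmul 0 0).ge
  have hv' : ‖v‖⁻¹ • v ∈ Metric.sphere (0 : E) 1 := by
    simp [norm_smul, inv_mul_cancel₀ (norm_ne_zero_iff.2 hv)]
  calc q u * ‖v‖ ^ 2 ≤ q (‖v‖⁻¹ • v) * ‖v‖ ^ 2 := by gcongr; exact hmin hv'
    _ = q v := by
      rw [hsmul, mul_comm, ← mul_assoc, ← mul_pow, mul_inv_cancel₀ (norm_ne_zero_iff.2 hv),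
        one_pow, one_mul]

theorem exists_le_of_isLocalMax_sum_comp_convexOn {E ι : Type*} [TopologicalSpace E]
    [AddCommGroup E] [Module ℝ E] [ContinuousAdd E] [ContinuousSMul ℝ E] [Fintype ι] [Nonempty ι]
    {g : ι → ℝ → ℝ} {Q : ι → E → ℝ} (hg : ∀ i, StrictAnti (g i))
    (hQ : ∀ i, ConvexOn ℝ univ (Q i)) {x : E} (hx : IsLocalMax (fun y => ∑ i, g i (Q i y)) x)
    (p : E) : ∃ i, Q i x ≤ Q i p := by
  by_contra! hlt
  set γ : ℝ → E := fun t => (1 - t) • p + t • x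
  have hγ : Tendsto γ (𝓝[<] 1) (𝓝 x) := by
    have : Tendsto γ (𝓝 1) (𝓝 (γ 1)) := (by fun_prop : Continuous γ).tendsto 1
    simpa [γ] using this.mono_left nhdsWithin_le_nhds
  have hγ_gt : ∀ t ∈ Ico (0 : ℝ) 1, ∑ i, g i (Q i x) < ∑ i, g i (Q i (γ t)) := fun t ht =>
    Finset.sum_lt_sum_of_nonempty Finset.univ_nonempty fun i _ => hg i <|
      calc Q i (γ t) ≤ (1 - t) • Q i p + t • Q i x :=
            (hQ i).2 trivial trivial (by linarith [ht.2]) ht.1 (by ring)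
        _ < Q i x := by simp only [smul_eq_mul]; nlinarith [hlt i, ht.2]
  obtain ⟨t, ht, hle⟩ := (Filter.Eventually.and (Ico_mem_nhdsLT one_pos) (hγ.eventually hx)).exists
  exact (hγ_gt t ht).not_ge hle

section QuadraticForm

variable {ι : Type*} [Fintype ι] {M : Matrix ι ι ℝ}

lemma Matrix.PosSemidef.convexOn_dotProduct_mulVec (hM : M.PosSemidef) :
    ConvexOn ℝ univ fun v : ι → ℝ => v ⬝ᵥ M *ᵥ v := by
  refine ⟨convex_univ, fun u _ w _ a b ha hb hab => ?_⟩
  have hdiff := hM.dotProduct_mulVec_nonneg (u - w)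
  obtain rfl : b = 1 - a := by linarith
  simp only [star_trivial, mulVec_add, mulVec_sub, mulVec_smul, dotProduct_add, dotProduct_sub,
    add_dotProduct, sub_dotProduct, dotProduct_smul, smul_dotProduct, smul_eq_mul] at hdiff ⊢
  nlinarith [mul_nonneg (mul_nonneg ha hb) hdiff]

lemma Matrix.PosSemidef.convexOn_dotProduct_mulVec_sub (hM : M.PosSemidef)
    (μ : EuclideanSpace ℝ ι) :
    ConvexOn ℝ univ fun x : EuclideanSpace ℝ ι => (x - μ).ofLp ⬝ᵥ M *ᵥ (x - μ).ofLp := by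
  have h := (hM.convexOn_dotProduct_mulVec.translate_right (-μ.ofLp)).comp_linearMap
    (WithLp.linearEquiv 2 ℝ (ι → ℝ)).toLinearMap
  rw [preimage_univ, preimage_univ] at h
  exact h.congr fun x _ => by simp [neg_add_eq_sub]

lemma Matrix.PosDef.exists_pos_mul_sq_norm_le_dotProduct_mulVec (hM : M.PosDef) :
    ∃ c > 0, ∀ v : EuclideanSpace ℝ ι, c * ‖v‖ ^ 2 ≤ v.ofLp ⬝ᵥ M *ᵥ v.ofLp := by
  refine exists_pos_mul_sq_norm_le (by fun_prop) (fun t v => ?_) fun v hv => ?_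
  · simp only [WithLp.ofLp_smul, mulVec_smul, dotProduct_smul, smul_dotProduct, smul_eq_mul]
    ring
  · simpa using hM.dotProduct_mulVec_pos (x := v.ofLp) (by simpa using hv)

lemma Matrix.PosDef.isBounded_setOf_dotProduct_mulVec_sub_le (hM : M.PosDef)
    (μ : EuclideanSpace ℝ ι) (C : ℝ) :
    Bornology.IsBounded {x : EuclideanSpace ℝ ι | (x - μ).ofLp ⬝ᵥ M *ᵥ (x - μ).ofLp ≤ C} := by
  obtain ⟨c, hc, hcM⟩ := hM.exists_pos_mul_sq_norm_le_dotProduct_mulVec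
  refine (Metric.isBounded_closedBall (x := μ) (r := √(C / c))).subset fun x hx => ?_
  rw [Metric.mem_closedBall, dist_eq_norm]
  exact Real.le_sqrt_of_sq_le <| (le_div_iff₀' hc).2 <| (hcM _).trans hx

end QuadraticForm

section Hessian

variable {ι : Type*} [Fintype ι] [DecidableEq ι] {f : EuclideanSpace ℝ ι → ℝ}
  {x : EuclideanSpace ℝ ι}

lemma hessianMatrix_apply (i j : ι) :
    hessianMatrix f x i j =
      fderiv ℝ (fderiv ℝ f) x (EuclideanSpace.single i 1) (EuclideanSpace.single j 1) := by
  simp [hessianMatrix, iteratedFDeriv_two_apply]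

lemma fderiv_fderiv_apply_single_eq_vecMul_hessianMatrix (z : EuclideanSpace ℝ ι) (j : ι) :
    fderiv ℝ (fderiv ℝ f) x z (EuclideanSpace.single j 1) = (z.ofLp ᵥ* hessianMatrix f x) j := by
  conv_lhs => rw [← (EuclideanSpace.basisFun ι ℝ).sum_repr z]
  simp [vecMul, dotProduct, hessianMatrix_apply]

lemma injective_fderiv_fderiv_of_det_hessianMatrix_ne_zero (h : (hessianMatrix f x).det ≠ 0) :
    Function.Injective (fderiv ℝ (fderiv ℝ f) x) := by
  refine (injective_iff_map_eq_zero _).2 fun z hz => ?_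
  have hvec : z.ofLp ᵥ* hessianMatrix f x = 0 := funext fun j => by
    rw [← fderiv_fderiv_apply_single_eq_vecMul_hessianMatrix, hz]; rfl
  by_contra hz0
  exact h (exists_vecMul_eq_zero_iff.1 ⟨z.ofLp, by simpa using hz0, hvec⟩)

lemma eventually_fderiv_ne_zero_of_det_hessianMatrix_ne_zero (hf : ContDiffAt ℝ 2 f x)
    (h : (hessianMatrix f x).det ≠ 0) : ∀ᶠ z in 𝓝[≠] x, fderiv ℝ f z ≠ 0 := by
  have hD : HasFDerivAt (fderiv ℝ f) (fderiv ℝ (fderiv ℝ f) x) x :=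
    ((hf.fderiv_right (m := 1) le_rfl).differentiableAt one_ne_zero).hasFDerivAt
  obtain ⟨K, -, hK⟩ := LinearMap.exists_antilipschitzWith (fderiv ℝ (fderiv ℝ f) x).toLinearMap
    (LinearMap.ker_eq_bot.2 (injective_fderiv_fderiv_of_det_hessianMatrix_ne_zero h))
  exact hD.eventually_ne ⟨K, hK⟩

theorem gradient_eq_zero_and_det_hessianMatrix_eq_zero_of_accPt (hf : ContDiff ℝ 2 f)
    (hx : AccPt x (𝓟 {y | IsLocalMax f y})) :
    gradient f x = 0 ∧ (hessianMatrix f x).det = 0 := by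
  have hcrit : AccPt x (𝓟 {y | fderiv ℝ f y = 0}) :=
    hx.mono (principal_mono.2 fun y hy => IsLocalMax.fderiv_eq_zero hy)
  have hx0 : fderiv ℝ f x = 0 := by
    have hclosed : IsClosed {y | fderiv ℝ f y = 0} :=
      isClosed_eq (hf.continuous_fderiv (by norm_num)) continuous_const
    exact hclosed.closure_subset (mem_closure_iff_clusterPt.2 hcrit.clusterPt)
  refine ⟨by simp [gradient, hx0], ?_⟩
  by_contra hdet
  rw [accPt_iff_frequently_nhdsNE] at hcrit
  exact hcrit (eventually_fderiv_ne_zero_of_det_hessianMatrix_ne_zero hf.contDiffAt hdet)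

end Hessian

section GaussianMixture

variable {ι : Type*} [Fintype ι] [DecidableEq ι] {k : ℕ}

lemma contDiff_mixturePdf (α : Fin k → ℝ) (μ : Fin k → EuclideanSpace ℝ ι)
    (S : Fin k → Matrix ι ι ℝ) {n : WithTop ℕ∞} : ContDiff ℝ n (mixturePdf α μ S) := by
  unfold mixturePdf gaussianPdf mulVec dotProduct
  fun_prop

lemma isBounded_setOf_isLocalMax_mixturePdf [Nonempty (Fin k)] {α : Fin k → ℝ}
    (μ : Fin k → EuclideanSpace ℝ ι) {S : Fin k → Matrix ι ι ℝ} (hα : ∀ i, 0 < α i)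
    (hS : ∀ i, (S i).PosDef) :
    Bornology.IsBounded {x | IsLocalMax (mixturePdf α μ S) x} := by
  set Q : Fin k → EuclideanSpace ℝ ι → ℝ := fun i x =>
    (x - μ i).ofLp ⬝ᵥ (S i)⁻¹ *ᵥ (x - μ i).ofLp
  have hg : ∀ i, StrictAnti fun s => α i * ((2 * Real.pi) ^ (-(Fintype.card ι : ℝ) / 2) *
      (S i).det ^ (-(1 : ℝ) / 2) * Real.exp (-(1 / 2) * s)) := fun i s t hst => by
    have := (hS i).det_pos
    exact mul_lt_mul_of_pos_left
      (mul_lt_mul_of_pos_left (Real.exp_lt_exp.2 (by linarith)) (by positivity)) (hα i)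
  have hmodes : ∀ x, IsLocalMax (mixturePdf α μ S) x → ∃ i, Q i x ≤ Q i 0 := fun x hx =>
    exists_le_of_isLocalMax_sum_comp_convexOn hg
      (fun i => (hS i).inv.posSemidef.convexOn_dotProduct_mulVec_sub (μ i)) hx 0
  refine (Bornology.isBounded_iUnion.2 fun i =>
    (hS i).inv.isBounded_setOf_dotProduct_mulVec_sub_le (μ i) (Q i 0)).subset ?_
  exact fun x hx => mem_iUnion.2 (hmodes x hx)

end GaussianMixture

/-- Proposition: infinitely many modes force a degenerate critical point.
If the modal set of a Gaussian mixture density $Φ$ is infinite, then $Φ$ has a degenerate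
critical point. -/
theorem infinite_modes_degenerate_critical_point
    {d k : ℕ} (α : Fin k → ℝ) (μ : Fin k → EuclideanSpace ℝ (Fin d))
    (S : Fin k → Matrix (Fin d) (Fin d) ℝ)
    (Φ : EuclideanSpace ℝ (Fin d) → ℝ)
    (hΦ : IsGaussianMixture Φ α μ S)
    (hmode : {x : EuclideanSpace ℝ (Fin d) | IsLocalMax Φ x}.Infinite) :
    ∃ x : EuclideanSpace ℝ (Fin d), gradient Φ x = 0 ∧ (hessianMatrix Φ x).det = 0 := by
  obtain ⟨hα, hsum, hS, hΦ⟩ := hΦ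
  obtain rfl : Φ = mixturePdf α μ S := funext hΦ
  have : Nonempty (Fin k) := Fin.pos_iff_nonempty.1 <| Nat.pos_of_ne_zero <| by
    rintro rfl
    simp at hsum
  obtain ⟨x₀, -, hacc⟩ := hmode.exists_accPt_of_subset_isCompact
    (isBounded_setOf_isLocalMax_mixturePdf μ hα hS).isCompact_closure subset_closure
  exact ⟨x₀,
    gradient_eq_zero_and_det_hessianMatrix_eq_zero_of_accPt (contDiff_mixturePdf α μ S) hacc⟩
end

section
/- Let h be a Gaussian mixture density on ℝ^d all of whose critical points are nondegenerate (a Morse Gaussian mixture density). Then there exists τ > 0 that is a regular value of h and is strictly smaller than all critical values of h, such that the superlevel set S_τ = {x ∈ ℝ^d : h(x) ≥ τ} is compact, connected, and contains every critical point of h. -/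
open scoped BigOperators RealInnerProductSpace
open Matrix

section
variable {d k : ℕ}
local notation "E" => EuclideanSpace ℝ (Fin d)

lemma quad_line_eq (μ0 : E) (M : Matrix (Fin d) (Fin d) ℝ) (x v : E) (t : ℝ) :
    ((fun i => (x + t • v) i - μ0 i) ⬝ᵥ (M *ᵥ fun i => (x + t • v) i - μ0 i))
      = ((fun i => x i - μ0 i) ⬝ᵥ (M *ᵥ fun i => x i - μ0 i))
        + t * (((fun i => v i) ⬝ᵥ (M *ᵥ fun i => x i - μ0 i))
              + ((fun i => x i - μ0 i) ⬝ᵥ (M *ᵥ fun i => v i)))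
        + t^2 * ((fun i => v i) ⬝ᵥ (M *ᵥ fun i => v i)) := by
  have hfun : (fun i => (x + t • v) i - μ0 i)
      = (fun i => x i - μ0 i) + t • (fun i => v i) := by
    funext i
    simp [PiLp.add_apply, PiLp.smul_apply, smul_eq_mul]
    ring
  rw [hfun, add_dotProduct, Matrix.mulVec_add, Matrix.mulVec_smul, dotProduct_add,
    dotProduct_add, smul_dotProduct, dotProduct_smul, dotProduct_smul]
  simp [smul_eq_mul]
  ring

lemma hasDerivAt_line_quad (μ0 : E) (M : Matrix (Fin d) (Fin d) ℝ) (x v : E) :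
    HasDerivAt (fun t : ℝ =>
        ((fun i => (x + t • v) i - μ0 i) ⬝ᵥ (M *ᵥ fun i => (x + t • v) i - μ0 i)))
      (((fun i => v i) ⬝ᵥ (M *ᵥ fun i => x i - μ0 i))
        + ((fun i => x i - μ0 i) ⬝ᵥ (M *ᵥ fun i => v i))) 0 := by
  set A := ((fun i => x i - μ0 i) ⬝ᵥ (M *ᵥ fun i => x i - μ0 i))
  set B := (((fun i => v i) ⬝ᵥ (M *ᵥ fun i => x i - μ0 i))
        + ((fun i => x i - μ0 i) ⬝ᵥ (M *ᵥ fun i => v i)))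
  set C := ((fun i => v i) ⬝ᵥ (M *ᵥ fun i => v i))
  have h1 : HasDerivAt (fun t : ℝ => A + t * B + t^2 * C) B 0 := by
    have ha : HasDerivAt (fun t : ℝ => t * B) B 0 := by
      simpa using (hasDerivAt_id (0:ℝ)).mul_const B
    have hb : HasDerivAt (fun t : ℝ => t^2 * C) 0 0 := by
      simpa using (hasDerivAt_pow 2 (0:ℝ)).mul_const C
    exact ((ha.const_add A).add hb).congr_deriv (by ring)
  exact h1.congr_of_eventuallyEq (Filter.Eventually.of_forall fun t =>
    quad_line_eq μ0 M x v t)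

lemma hasDerivAt_gauss_line (μ0 : E) (S0 : Matrix (Fin d) (Fin d) ℝ) (x v : E) :
    HasDerivAt (fun t : ℝ => gaussianPdf μ0 S0 (x + t • v))
      (gaussianPdf μ0 S0 x * (-(1 / 2 : ℝ) *
        (((fun i => v i) ⬝ᵥ (S0⁻¹ *ᵥ fun i => x i - μ0 i))
          + ((fun i => x i - μ0 i) ⬝ᵥ (S0⁻¹ *ᵥ fun i => v i))))) 0 := by
  have hq := hasDerivAt_line_quad μ0 (S0⁻¹) x v
  have h1 := ((hq.const_mul (-(1 / 2 : ℝ))).exp).const_mul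
    ((2 * Real.pi) ^ (-(Fintype.card (Fin d) : ℝ) / 2) * S0.det ^ (-(1 : ℝ) / 2))
  have h0 : (fun i => (x + (0:ℝ) • v) i - μ0 i) = fun i => x i - μ0 i := by
    funext i; simp
  unfold gaussianPdf
  refine h1.congr_deriv ?_
  rw [h0]
  ring

lemma hasDerivAt_mixture_line (α : Fin k → ℝ) (μ : Fin k → E)
    (S : Fin k → Matrix (Fin d) (Fin d) ℝ) (x v : E) :
    HasDerivAt (fun t : ℝ => mixturePdf α μ S (x + t • v))
      (∑ i, α i * (gaussianPdf (μ i) (S i) x * (-(1 / 2 : ℝ) *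
        (((fun j => v j) ⬝ᵥ ((S i)⁻¹ *ᵥ fun j => x j - μ i j))
          + ((fun j => x j - μ i j) ⬝ᵥ ((S i)⁻¹ *ᵥ fun j => v j)))))) 0 := by
  unfold mixturePdf
  exact HasDerivAt.fun_sum fun i _ =>
    (hasDerivAt_gauss_line (μ i) (S i) x v).const_mul (α i)
end

section chunk5
variable {d k : ℕ}
local notation "E" => EuclideanSpace ℝ (Fin d)

lemma line_deriv_inner {h : E → ℝ} (hf : ContDiff ℝ (⊤ : ℕ∞) h) (x v : E) :
    HasDerivAt (fun t : ℝ => h (x + t • v)) ⟪gradient h x, v⟫ 0 := by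
  have hline : HasDerivAt (fun t : ℝ => x + t • v) v 0 := by
    simpa using ((hasDerivAt_id (0:ℝ)).smul_const v).const_add x
  have hx : HasFDerivAt h (fderiv ℝ h x) (x + (0:ℝ) • v) := by
    simpa using (hf.differentiable (by simp) x).hasFDerivAt
  have hcomp := hx.comp_hasDerivAt 0 hline
  have hinner : ⟪gradient h x, v⟫ = fderiv ℝ h x v := by
    rw [gradient, InnerProductSpace.toDual_symm_apply]
  rw [hinner]
  exact hcomp

lemma dot_eq_inner (u : Fin d → ℝ) (x : E) :
    (u ⬝ᵥ fun i => x i) = ⟪(WithLp.equiv 2 (Fin d → ℝ)).symm u, x⟫ := by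
  simp [dotProduct, PiLp.inner_apply, RCLike.inner_apply, conj_trivial, mul_comm]

lemma sym_dot {S0 : Matrix (Fin d) (Fin d) ℝ} (hS : S0.PosDef) (v w : Fin d → ℝ) :
    v ⬝ᵥ (S0⁻¹ *ᵥ w) = w ⬝ᵥ (S0⁻¹ *ᵥ v) := by
  have hH : (S0⁻¹)ᵀ = S0⁻¹ := by
    have h1 := hS.inv.isHermitian.eq
    rwa [Matrix.conjTranspose_eq_transpose_of_trivial] at h1
  rw [Matrix.dotProduct_mulVec, ← Matrix.mulVec_transpose, hH, dotProduct_comm]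

lemma quadform_contDiff (μ0 : E) (M : Matrix (Fin d) (Fin d) ℝ) :
    ContDiff ℝ (⊤ : ℕ∞) (fun x : E => (fun i => x i - μ0 i) ⬝ᵥ (M *ᵥ fun i => x i - μ0 i)) := by
  have hcoord : ∀ i, ContDiff ℝ (⊤ : ℕ∞) (fun x : E => x i - μ0 i) := fun i =>
    ((EuclideanSpace.proj i : E →L[ℝ] ℝ).contDiff).sub contDiff_const
  simp only [dotProduct, Matrix.mulVec]
  exact ContDiff.sum fun i _ =>
    (hcoord i).mul (ContDiff.sum fun j _ => contDiff_const.mul (hcoord j))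

lemma gaussianPdf_contDiff (μ0 : E) (S0 : Matrix (Fin d) (Fin d) ℝ) :
    ContDiff ℝ (⊤ : ℕ∞) (gaussianPdf μ0 S0) := by
  unfold gaussianPdf
  exact contDiff_const.mul
    (Real.contDiff_exp.comp (contDiff_const.mul (quadform_contDiff μ0 (S0⁻¹))))

lemma mixture_contDiff (α : Fin k → ℝ) (μ : Fin k → E)
    (S : Fin k → Matrix (Fin d) (Fin d) ℝ) :
    ContDiff ℝ (⊤ : ℕ∞) (mixturePdf α μ S) := by
  unfold mixturePdf
  exact ContDiff.sum fun i _ => contDiff_const.mul (gaussianPdf_contDiff (μ i) (S i))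

lemma gaussianPdf_pos_s4 (μ0 : E) {S0 : Matrix (Fin d) (Fin d) ℝ} (hS0 : S0.PosDef) (x : E) :
    0 < gaussianPdf μ0 S0 x := by
  unfold gaussianPdf
  have h1 : (0:ℝ) < (2*Real.pi) ^ (-(Fintype.card (Fin d):ℝ)/2) :=
    Real.rpow_pos_of_pos (by positivity) _
  have h2 : 0 < S0.det ^ (-(1:ℝ)/2) := Real.rpow_pos_of_pos hS0.det_pos _
  exact mul_pos (mul_pos h1 h2) (Real.exp_pos _)

lemma mixture_pos {α : Fin k → ℝ} (μ : Fin k → E) {S : Fin k → Matrix (Fin d) (Fin d) ℝ}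
    (hα : ∀ i, 0 < α i) (hsum : (∑ i, α i) = 1) (hS : ∀ i, (S i).PosDef) (x : E) :
    0 < mixturePdf α μ S x := by
  have hk : Nonempty (Fin k) := by
    by_contra hc
    rw [not_nonempty_iff] at hc
    rw [Finset.univ_eq_empty] at hsum
    simp at hsum
  unfold mixturePdf
  exact Finset.sum_pos (fun i _ => mul_pos (hα i) (gaussianPdf_pos_s4 (μ i) (hS i) x))
    Finset.univ_nonempty

lemma critical_identity {α : Fin k → ℝ} {μ : Fin k → E} {S : Fin k → Matrix (Fin d) (Fin d) ℝ}
    (hS : ∀ i, (S i).PosDef) {x : E}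
    (hx : gradient (mixturePdf α μ S) x = 0) (v : E) :
    ∑ i, α i * gaussianPdf (μ i) (S i) x *
      ((fun j => x j - μ i j) ⬝ᵥ ((S i)⁻¹ *ᵥ fun j => v j)) = 0 := by
  have h1 := hasDerivAt_mixture_line α μ S x v
  have h2 := line_deriv_inner (mixture_contDiff α μ S) x v
  rw [hx] at h2
  simp only [inner_zero_left] at h2
  have h3 := h2.unique h1
  have hsym : ∀ i : Fin k,
      ((fun j => v j) ⬝ᵥ ((S i)⁻¹ *ᵥ fun j => x j - μ i j))
        = ((fun j => x j - μ i j) ⬝ᵥ ((S i)⁻¹ *ᵥ fun j => v j)) :=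
    fun i => sym_dot (hS i) _ _
  have h4 : ∀ i : Fin k, α i * (gaussianPdf (μ i) (S i) x * (-(1 / 2 : ℝ) *
      (((fun j => v j) ⬝ᵥ ((S i)⁻¹ *ᵥ fun j => x j - μ i j))
        + ((fun j => x j - μ i j) ⬝ᵥ ((S i)⁻¹ *ᵥ fun j => v j)))))
      = -(α i * gaussianPdf (μ i) (S i) x *
          ((fun j => x j - μ i j) ⬝ᵥ ((S i)⁻¹ *ᵥ fun j => v j))) := by
    intro i
    rw [hsym i]
    ring
  rw [Finset.sum_congr rfl (fun i _ => h4 i)] at h3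
  rw [Finset.sum_neg_distrib] at h3
  linarith [h3]
end chunk5

section chunk6
variable {d k : ℕ}
local notation "E" => EuclideanSpace ℝ (Fin d)

lemma posdef_quad_lower {M : Matrix (Fin d) (Fin d) ℝ} (hM : M.PosDef) :
    ∃ c > 0, ∀ v : E, c * ‖v‖^2 ≤ (fun i => v i) ⬝ᵥ (M *ᵥ fun i => v i) := by
  have hpos : ∀ v : E, v ≠ 0 → 0 < (fun i => v i) ⬝ᵥ (M *ᵥ fun i => v i) := by
    intro v hv
    have hv' : (fun i => v i) ≠ (0 : Fin d → ℝ) := by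
      intro hc
      apply hv
      ext i
      exact congrFun hc i
    have := hM.dotProduct_mulVec_pos hv'
    simpa [star_trivial] using this
  rcases isEmpty_or_nonempty (Fin d) with hd | hd
  · refine ⟨1, one_pos, fun v => ?_⟩
    have hv : v = 0 := Subsingleton.elim v 0
    subst hv
    simp [dotProduct]
  · have hsph : (Metric.sphere (0:E) 1).Nonempty := by
      obtain ⟨i0⟩ := hd
      refine ⟨EuclideanSpace.single i0 (1:ℝ), ?_⟩
      simp [EuclideanSpace.norm_single]
    have hcontq : Continuous (fun v : E => (fun i => v i) ⬝ᵥ (M *ᵥ fun i => v i)) := by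
      simp only [dotProduct, Matrix.mulVec]
      exact continuous_finset_sum _ fun i _ =>
        ((EuclideanSpace.proj i : E →L[ℝ] ℝ).continuous.mul <|
          continuous_finset_sum _ fun j _ =>
            continuous_const.mul (EuclideanSpace.proj j : E →L[ℝ] ℝ).continuous)
    obtain ⟨v0, hv0mem, hv0min⟩ := (isCompact_sphere (0:E) 1).exists_isMinOn hsph
      hcontq.continuousOn
    have hv0norm : ‖v0‖ = 1 := by simpa using hv0mem
    have hv0ne : v0 ≠ 0 := by
      intro hc; rw [hc] at hv0norm; simp at hv0norm
    set c := (fun i => v0 i) ⬝ᵥ (M *ᵥ fun i => v0 i) with hc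
    refine ⟨c, hpos v0 hv0ne, fun v => ?_⟩
    rcases eq_or_ne v 0 with rfl | hv
    · simp [dotProduct]
    · have hnv : 0 < ‖v‖ := norm_pos_iff.2 hv
      set u : E := ‖v‖⁻¹ • v with hu
      have hunorm : u ∈ Metric.sphere (0:E) 1 := by
        simp [hu, norm_smul, abs_of_pos (inv_pos.2 hnv), inv_mul_cancel₀ hnv.ne']
      have hscale : (fun i => v i) = ‖v‖ • (fun i => u i) := by
        funext i
        simp [hu, PiLp.smul_apply, smul_eq_mul]
        field_simp
      have hvq : (fun i => v i) ⬝ᵥ (M *ᵥ fun i => v i)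
          = ‖v‖^2 * ((fun i => u i) ⬝ᵥ (M *ᵥ fun i => u i)) := by
        rw [hscale, smul_dotProduct, Matrix.mulVec_smul, dotProduct_smul]
        simp [smul_eq_mul]; ring
      have hle : c ≤ (fun i => u i) ⬝ᵥ (M *ᵥ fun i => u i) := hv0min hunorm
      calc c * ‖v‖^2 ≤ ((fun i => u i) ⬝ᵥ (M *ᵥ fun i => u i)) * ‖v‖^2 :=
            mul_le_mul_of_nonneg_right hle (by positivity)
        _ = (fun i => v i) ⬝ᵥ (M *ᵥ fun i => v i) := by rw [hvq]; ring

lemma critical_norm_le {α : Fin k → ℝ} {μ : Fin k → E} {S : Fin k → Matrix (Fin d) (Fin d) ℝ}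
    (hα : ∀ i, 0 < α i) (hsum : (∑ i, α i) = 1) (hS : ∀ i, (S i).PosDef) :
    ∃ R : ℝ, 0 < R ∧ ∀ x : E, gradient (mixturePdf α μ S) x = 0 → ‖x‖ ≤ R := by
  have hk : Nonempty (Fin k) := by
    by_contra hc
    rw [not_nonempty_iff] at hc
    rw [Finset.univ_eq_empty] at hsum
    simp at hsum
  -- for each i pick the coercivity constant of (S i)⁻¹
  choose c hcpos hclow using fun i : Fin k => posdef_quad_lower (d := d) (hS i).inv
  -- the norm of the "shift vector"
  set z : Fin k → E := fun i =>
    (WithLp.equiv 2 (Fin d → ℝ)).symm ((S i)⁻¹ *ᵥ fun j => μ i j) with hz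
  set R : ℝ := 1 + ∑ i, ‖z i‖ / c i with hR
  have hRpos : 0 < R := by
    have h0 : (0:ℝ) ≤ ∑ i, ‖z i‖ / c i :=
      Finset.sum_nonneg fun i _ => div_nonneg (norm_nonneg _) (hcpos i).le
    rw [hR]
    linarith
  refine ⟨R, hRpos, fun x hx => ?_⟩
  by_contra hcon
  push_neg at hcon
  have hxpos : 0 < ‖x‖ := lt_trans hRpos hcon
  have hid := critical_identity hS hx x
  -- each term is positive
  have hterm : ∀ i : Fin k, 0 < α i * gaussianPdf (μ i) (S i) x *
      ((fun j => x j - μ i j) ⬝ᵥ ((S i)⁻¹ *ᵥ fun j => x j)) := by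
    intro i
    refine mul_pos (mul_pos (hα i) (gaussianPdf_pos_s4 (μ i) (hS i) x)) ?_
    have hsplit : ((fun j => x j - μ i j) ⬝ᵥ ((S i)⁻¹ *ᵥ fun j => x j))
        = ((fun j => x j) ⬝ᵥ ((S i)⁻¹ *ᵥ fun j => x j))
          - ((fun j => μ i j) ⬝ᵥ ((S i)⁻¹ *ᵥ fun j => x j)) := by
      have : (fun j => x j - μ i j) = (fun j => x j) - (fun j => μ i j) := by
        funext j; simp
      rw [this, sub_dotProduct]
    have hquad : c i * ‖x‖^2 ≤ ((fun j => x j) ⬝ᵥ ((S i)⁻¹ *ᵥ fun j => x j)) := hclow i x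
    have hshift : ((fun j => μ i j) ⬝ᵥ ((S i)⁻¹ *ᵥ fun j => x j)) ≤ ‖z i‖ * ‖x‖ := by
      have h1 : ((fun j => μ i j) ⬝ᵥ ((S i)⁻¹ *ᵥ fun j => x j)) = ⟪z i, x⟫ := by
        rw [sym_dot (hS i), dotProduct_comm]
        exact dot_eq_inner _ x
      rw [h1]
      exact real_inner_le_norm (z i) x
    have hRz : ‖z i‖ / c i ≤ R - 1 := by
      rw [hR]
      have := Finset.single_le_sum
        (f := fun i => ‖z i‖ / c i)
        (fun j _ => div_nonneg (norm_nonneg _) (hcpos j).le) (Finset.mem_univ i)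
      linarith
    have hzc : ‖z i‖ ≤ (R - 1) * c i := by
      rw [div_le_iff₀ (hcpos i)] at hRz
      linarith
    have hkey : ‖z i‖ * ‖x‖ < c i * ‖x‖^2 := by
      have h2 : ‖z i‖ * ‖x‖ ≤ (R - 1) * c i * ‖x‖ :=
        mul_le_mul_of_nonneg_right hzc hxpos.le
      have h3 : (R - 1) * c i * ‖x‖ < ‖x‖ * c i * ‖x‖ := by
        have : R - 1 < ‖x‖ := by linarith
        have := mul_lt_mul_of_pos_right (mul_lt_mul_of_pos_right this (hcpos i)) hxpos
        linarith [this]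
      calc ‖z i‖ * ‖x‖ ≤ (R - 1) * c i * ‖x‖ := h2
        _ < ‖x‖ * c i * ‖x‖ := h3
        _ = c i * ‖x‖^2 := by ring
    rw [hsplit]
    linarith
  have hsumpos : 0 < ∑ i, α i * gaussianPdf (μ i) (S i) x *
      ((fun j => x j - μ i j) ⬝ᵥ ((S i)⁻¹ *ᵥ fun j => x j)) :=
    Finset.sum_pos (fun i _ => hterm i) Finset.univ_nonempty
  rw [hid] at hsumpos
  exact lt_irrefl 0 hsumpos
end chunk6

section chunk7
variable {d k : ℕ}
local notation "E" => EuclideanSpace ℝ (Fin d)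

lemma mixture_tendsto_zero (α : Fin k → ℝ) (μ : Fin k → E)
    {S : Fin k → Matrix (Fin d) (Fin d) ℝ} (hα : ∀ i, 0 < α i)
    (hS : ∀ i, (S i).PosDef) :
    Filter.Tendsto (mixturePdf α μ S) (Filter.cocompact E) (nhds 0) := by
  unfold mixturePdf
  have h0 : (nhds (0:ℝ)) = nhds (∑ i : Fin k, 0) := by simp
  rw [h0]
  refine tendsto_finset_sum _ fun i _ => ?_
  obtain ⟨c, hc, hlow⟩ := posdef_quad_lower (d := d) (hS i).inv
  set C : ℝ := α i * ((2 * Real.pi) ^ (-(Fintype.card (Fin d) : ℝ) / 2) *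
    (S i).det ^ (-(1 : ℝ) / 2)) with hC
  have hCpos : 0 < C := by
    have h1 : (0:ℝ) < (2*Real.pi) ^ (-(Fintype.card (Fin d):ℝ)/2) :=
      Real.rpow_pos_of_pos (by positivity) _
    have h2 : 0 < (S i).det ^ (-(1:ℝ)/2) := Real.rpow_pos_of_pos (hS i).det_pos _
    exact mul_pos (hα i) (mul_pos h1 h2)
  -- the exponential upper bound tends to 0
  have h1 : Filter.Tendsto (fun x : E => x - μ i) (Filter.cocompact E)
      (Filter.cocompact E) := (Homeomorph.subRight (μ i)).map_cocompact.le
  have h2 : Filter.Tendsto (fun x : E => ‖x - μ i‖) (Filter.cocompact E) Filter.atTop :=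
    tendsto_norm_cocompact_atTop.comp h1
  have h3 : Filter.Tendsto (fun r : ℝ => -(1/2 : ℝ) * (c * r^2)) Filter.atTop Filter.atBot := by
    have ha : Filter.Tendsto (fun r : ℝ => r^2) Filter.atTop Filter.atTop :=
      Filter.tendsto_pow_atTop two_ne_zero
    have hb : Filter.Tendsto (fun r : ℝ => c * r^2) Filter.atTop Filter.atTop :=
      ha.const_mul_atTop hc
    exact (Filter.tendsto_const_mul_atBot_of_neg (by norm_num : -(1/2:ℝ) < 0)).2 hb
  have h4 : Filter.Tendsto (fun x : E => C * Real.exp (-(1/2 : ℝ) * (c * ‖x - μ i‖^2)))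
      (Filter.cocompact E) (nhds 0) := by
    have := (Real.tendsto_exp_atBot.comp (h3.comp h2)).const_mul C
    simpa using this
  refine squeeze_zero (fun x => ?_) (fun x => ?_) h4
  · exact (mul_pos (hα i) (gaussianPdf_pos_s4 (μ i) (hS i) x)).le
  · show α i * gaussianPdf (μ i) (S i) x ≤ _
    unfold gaussianPdf
    rw [show α i * ((2 * Real.pi) ^ (-(Fintype.card (Fin d) : ℝ) / 2) *
        (S i).det ^ (-(1 : ℝ) / 2) *
        Real.exp (-(1 / 2 : ℝ) * ((fun j => x j - μ i j) ⬝ᵥ ((S i)⁻¹ *ᵥ fun j => x j - μ i j))))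
      = C * Real.exp (-(1 / 2 : ℝ) *
          ((fun j => x j - μ i j) ⬝ᵥ ((S i)⁻¹ *ᵥ fun j => x j - μ i j))) by rw [hC]; ring]
    refine mul_le_mul_of_nonneg_left ?_ hCpos.le
    rw [Real.exp_le_exp]
    have hfun : (fun j => (x - μ i) j) = fun j => x j - μ i j := by
      funext j; simp
    have := hlow (x - μ i)
    rw [hfun] at this
    nlinarith [this]

lemma superlevel_isCompact {f : E → ℝ} (hcont : Continuous f)
    (htend : Filter.Tendsto f (Filter.cocompact E) (nhds 0)) {ε : ℝ} (hε : 0 < ε) :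
    IsCompact {x : E | ε ≤ f x} := by
  have hev : ∀ᶠ x in Filter.cocompact E, f x < ε := htend.eventually_lt_const hε
  obtain ⟨K, hK, hsub⟩ := Filter.hasBasis_cocompact.eventually_iff.1 hev
  refine hK.of_isClosed_subset (isClosed_le continuous_const hcont) ?_
  intro x hx
  by_contra hxK
  exact absurd (hsub hxK) (not_lt.2 hx)
end chunk7

section chunk8
variable {d k : ℕ}
local notation "E" => EuclideanSpace ℝ (Fin d)

lemma line_deriv_inner' {f : E → ℝ} (hf : ContDiff ℝ (⊤ : ℕ∞) f) (x v : E) (s : ℝ) :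
    HasDerivAt (fun t : ℝ => f (x + t • v)) ⟪gradient f (x + s • v), v⟫ s := by
  have hline : HasDerivAt (fun t : ℝ => x + t • v) v s := by
    simpa using ((hasDerivAt_id (s:ℝ)).smul_const v).const_add x
  have hx : HasFDerivAt f (fderiv ℝ f (x + s • v)) (x + s • v) :=
    (hf.differentiable (by simp) (x + s • v)).hasFDerivAt
  have hcomp := hx.comp_hasDerivAt s hline
  have hinner : ⟪gradient f (x + s • v), v⟫ = fderiv ℝ f (x + s • v) v := by
    rw [gradient, InnerProductSpace.toDual_symm_apply]
  rw [hinner]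
  exact hcomp

lemma gradient_contDiff {f : E → ℝ} (hf : ContDiff ℝ (⊤ : ℕ∞) f) :
    ContDiff ℝ (⊤ : ℕ∞) (gradient f) := by
  have h1 : ContDiff ℝ (⊤ : ℕ∞) (fderiv ℝ f) := hf.fderiv_right (mod_cast le_top)
  exact ((InnerProductSpace.toDual ℝ E).symm.toContinuousLinearEquiv
    |>.toContinuousLinearMap.contDiff).comp h1

set_option maxHeartbeats 2000000 in
lemma superlevel_isConnected {α : Fin k → ℝ} {μ : Fin k → E}
    {S : Fin k → Matrix (Fin d) (Fin d) ℝ}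
    (hα : ∀ i, 0 < α i) (hsum : (∑ i, α i) = 1) (hS : ∀ i, (S i).PosDef)
    {τ τ' : ℝ} (hτ : 0 < τ) (hττ' : τ < τ')
    (hcrit : ∀ x : E, gradient (mixturePdf α μ S) x = 0 → τ' < mixturePdf α μ S x)
    (x0 : E) (hx0 : τ ≤ mixturePdf α μ S x0) :
    IsConnected {x : E | τ ≤ mixturePdf α μ S x} := by
  set f := mixturePdf α μ S with hf
  have hsmooth : ContDiff ℝ (⊤ : ℕ∞) f := mixture_contDiff α μ S
  have hcont : Continuous f := hsmooth.continuous
  have hpos : ∀ x, 0 < f x := mixture_pos μ hα hsum hS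
  set g := gradient f with hg
  have hgsmooth : ContDiff ℝ (⊤ : ℕ∞) g := gradient_contDiff hsmooth
  have hgcont : Continuous g := hgsmooth.continuous
  set K := {x : E | τ ≤ f x} with hK
  refine ⟨⟨x0, hx0⟩, ?_⟩
  intro U V hU hV hKUV hUne hVne
  obtain ⟨a, haK, haU⟩ := hUne
  obtain ⟨b, hbK, hbV⟩ := hVne
  by_contra hempty
  -- the initial segment path
  set seg : ℝ → E := fun s => a + s • (b - a) with hseg
  have hsegcont : Continuous seg :=
    continuous_const.add (continuous_id.smul continuous_const)
  have hsegcomp : IsCompact (seg '' Set.Icc 0 1) := isCompact_Icc.image hsegcont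
  obtain ⟨p, hp, hpmin⟩ := hsegcomp.exists_isMinOn
    (Set.Nonempty.image _ ⟨0, Set.left_mem_Icc.2 zero_le_one⟩) hcont.continuousOn
  set c₀ := f p with hc₀
  have hc₀pos : 0 < c₀ := hpos p
  have hc₀seg : ∀ s ∈ Set.Icc (0:ℝ) 1, c₀ ≤ f (seg s) := fun s hs =>
    hpmin (Set.mem_image_of_mem _ hs)
  set c₁ := min c₀ τ with hc₁
  have hc₁pos : 0 < c₁ := lt_min hc₀pos hτ
  have hc₁τ : c₁ ≤ τ := min_le_right _ _
  have hc₁c₀ : c₁ ≤ c₀ := min_le_left _ _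
  -- compactness of the superlevel region and bounds
  have htends := mixture_tendsto_zero α μ hα hS
  have hKc : IsCompact {x : E | c₁ ≤ f x} := superlevel_isCompact hcont htends hc₁pos
  obtain ⟨R, hR⟩ := hKc.isBounded.subset_closedBall 0
  set Ball := Metric.closedBall (0:E) (R+1) with hBall
  have hBallcomp : IsCompact Ball := isCompact_closedBall _ _
  have hBallconv : Convex ℝ Ball := convex_closedBall _ _
  have hRBall : Metric.closedBall (0:E) R ⊆ Ball :=
    Metric.closedBall_subset_closedBall (by linarith)
  -- bound on the gradient on Ball
  obtain ⟨G0, hG0⟩ := hBallcomp.exists_bound_of_continuousOn hgcont.continuousOn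
  set G := max G0 1 with hG
  have hG1 : (1:ℝ) ≤ G := le_max_right _ _
  have hGpos : 0 < G := lt_of_lt_of_le one_pos hG1
  have hGbound : ∀ x ∈ Ball, ‖g x‖ ≤ G := fun x hx => le_trans (hG0 x hx) (le_max_left _ _)
  -- Lipschitz bound for the gradient on Ball
  have hdg : Continuous (fderiv ℝ g) :=
    (hgsmooth.fderiv_right (mod_cast le_top) : ContDiff ℝ (⊤ : ℕ∞) (fderiv ℝ g)).continuous
  obtain ⟨L0, hL0⟩ := hBallcomp.exists_bound_of_continuousOn hdg.continuousOn
  set L := max L0 0 with hL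
  have hLnonneg : (0:ℝ) ≤ L := le_max_right _ _
  have hLip : ∀ x ∈ Ball, ∀ y ∈ Ball, ‖g y - g x‖ ≤ L * ‖y - x‖ := by
    intro x hx y hy
    exact Convex.norm_image_sub_le_of_norm_fderiv_le
      (fun z _ => (hgsmooth.differentiable (by simp)).differentiableAt)
      (fun z hz => le_trans (hL0 z hz) (le_max_left _ _)) hBallconv hx hy
  -- gradient lower bound on the band
  have hδex : ∃ δ > 0, ∀ x : E, c₁ ≤ f x → f x ≤ τ' → δ ≤ ‖g x‖ := by
    set D := {x : E | c₁ ≤ f x} ∩ {x : E | f x ≤ τ'} with hD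
    have hDcomp : IsCompact D := hKc.inter_right (isClosed_le hcont continuous_const)
    by_cases hDne : D.Nonempty
    · obtain ⟨w, hw, hwmin⟩ := hDcomp.exists_isMinOn hDne hgcont.norm.continuousOn
      refine ⟨‖g w‖, ?_, fun x h1 h2 => hwmin ⟨h1, h2⟩⟩
      rcases eq_or_ne (g w) 0 with hgw | hgw
      · exact absurd (hcrit w hgw) (not_lt.2 hw.2)
      · exact norm_pos_iff.2 hgw
    · exact ⟨1, one_pos, fun x h1 h2 => absurd ⟨h1, h2⟩ (fun hc => hDne ⟨x, hc⟩)⟩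
  obtain ⟨δ, hδpos, hδlow⟩ := hδex
  -- step size
  set t := min (1/G) (1/(2*(L+1))) with ht
  have htpos : 0 < t := lt_min (by positivity) (by positivity)
  have htG : t * G ≤ 1 := by
    calc t * G ≤ 1/G * G := mul_le_mul_of_nonneg_right (min_le_left _ _) hGpos.le
      _ = 1 := by field_simp
  have htL : L * t ≤ 1/2 := by
    have h1 : t ≤ 1/(2*(L+1)) := min_le_right _ _
    have h2 : L * t ≤ L * (1/(2*(L+1))) := mul_le_mul_of_nonneg_left h1 hLnonneg
    have h3 : L * (1/(2*(L+1))) ≤ 1/2 := by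
      rw [mul_one_div, div_le_div_iff₀ (by positivity) (by norm_num : (0:ℝ) < 2)]
      nlinarith
    linarith
  set ρ := t * δ^2 / 2 with hρ
  have hρpos : 0 < ρ := by positivity
  -- the ascent map
  set F : E → E := fun x => x + t • g x with hF
  have hFcont : Continuous F := continuous_id.add (hgcont.const_smul t)
  -- KEY inequality
  have KEY : ∀ x : E, c₁ ≤ f x → ∀ θ : ℝ, 0 ≤ θ → θ ≤ t →
      f x + θ * ‖g x‖^2 / 2 ≤ f (x + θ • g x) := by
    intro x hx θ hθ0 hθt
    set u : E := θ • g x with hu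
    have hxR : x ∈ Metric.closedBall (0:E) R := hR hx
    have hxBall : x ∈ Ball := hRBall hxR
    have hgxG : ‖g x‖ ≤ G := hGbound x hxBall
    have hnu : ‖u‖ = θ * ‖g x‖ := by
      rw [hu, norm_smul, Real.norm_of_nonneg hθ0]
    have hu1 : ‖u‖ ≤ 1 := by
      rw [hnu]
      calc θ * ‖g x‖ ≤ t * G := mul_le_mul hθt hgxG (norm_nonneg _) htpos.le
        _ ≤ 1 := htG
    have hφcont : ContinuousOn (fun r : ℝ => f (x + r • u)) (Set.Icc 0 1) :=
      (hcont.comp (continuous_const.add (continuous_id.smul continuous_const))).continuousOn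
    obtain ⟨cc, hcc, hslope⟩ := exists_hasDerivAt_eq_slope
      (fun r : ℝ => f (x + r • u)) (fun s => ⟪g (x + s • u), u⟫)
      zero_lt_one hφcont (fun s _ => line_deriv_inner' hsmooth x u s)
    have hxn : ‖x‖ ≤ R := by simpa using hxR
    have hccu : ‖cc • u‖ ≤ 1 := by
      rw [norm_smul, Real.norm_of_nonneg hcc.1.le]
      calc cc * ‖u‖ ≤ 1 * 1 := mul_le_mul hcc.2.le hu1 (norm_nonneg _) zero_le_one
        _ = 1 := by norm_num
    have hccBall : x + cc • u ∈ Ball := by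
      have h1 : ‖x + cc • u‖ ≤ ‖x‖ + ‖cc • u‖ := norm_add_le _ _
      simp only [hBall, Metric.mem_closedBall, dist_zero_right]
      linarith
    have hval : f (x + u) - f x = ⟪g (x + cc • u), u⟫ := by
      have h1 := hslope
      simp only [zero_smul, add_zero, one_smul, sub_zero, div_one] at h1
      rw [h1]
    have hsplit : ⟪g (x + cc • u), u⟫ = ⟪g x, u⟫ + ⟪g (x + cc • u) - g x, u⟫ := by
      rw [inner_sub_left]; ring
    have hgu : ⟪g x, u⟫ = θ * ‖g x‖^2 := by
      rw [hu, real_inner_smul_right, real_inner_self_eq_norm_sq]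
    have herr : |⟪g (x + cc • u) - g x, u⟫| ≤ L * θ^2 * ‖g x‖^2 := by
      calc |⟪g (x + cc • u) - g x, u⟫| ≤ ‖g (x + cc • u) - g x‖ * ‖u‖ :=
            abs_real_inner_le_norm _ _
        _ ≤ (L * ‖(x + cc • u) - x‖) * ‖u‖ :=
            mul_le_mul_of_nonneg_right (hLip x hxBall _ hccBall) (norm_nonneg _)
        _ ≤ (L * ‖u‖) * ‖u‖ := by
            refine mul_le_mul_of_nonneg_right ?_ (norm_nonneg _)
            refine mul_le_mul_of_nonneg_left ?_ hLnonneg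
            have h2 : (x + cc • u) - x = cc • u := by abel
            rw [h2]
            calc ‖cc • u‖ = cc * ‖u‖ := by
                  rw [norm_smul, Real.norm_of_nonneg hcc.1.le]
              _ ≤ 1 * ‖u‖ := mul_le_mul_of_nonneg_right hcc.2.le (norm_nonneg _)
              _ = ‖u‖ := one_mul _
        _ = L * θ^2 * ‖g x‖^2 := by rw [hnu]; ring
    have habs := (abs_le.1 herr).1
    have hLθ : L * θ ≤ 1/2 := by
      calc L * θ ≤ L * t := mul_le_mul_of_nonneg_left hθt hLnonneg
        _ ≤ 1/2 := htL
    have hgn : (0:ℝ) ≤ ‖g x‖^2 := sq_nonneg _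
    have hmm := mul_le_mul_of_nonneg_right hLθ (mul_nonneg hθ0 hgn)
    nlinarith [hval, hsplit, hgu, habs, hmm]
  -- one-step invariant
  have STEP : ∀ (n : ℕ) (x : E), min τ (c₁ + (n:ℝ) * ρ) ≤ f x →
      min τ (c₁ + ((n:ℝ)+1) * ρ) ≤ f (F x) := by
    intro n x hx
    have hnρ : (0:ℝ) ≤ (n:ℝ) * ρ := mul_nonneg (Nat.cast_nonneg n) hρpos.le
    have hc₁x : c₁ ≤ f x := le_trans (le_min hc₁τ (by linarith)) hx
    have hKt : f x + t * ‖g x‖^2 / 2 ≤ f (F x) := KEY x hc₁x t htpos.le le_rfl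
    by_cases hcase : f x ≤ τ
    · have hδx : δ ≤ ‖g x‖ := hδlow x hc₁x (le_trans hcase hττ'.le)
      have hρle : ρ ≤ t * ‖g x‖^2 / 2 := by
        rw [hρ]
        have hsq : δ^2 ≤ ‖g x‖^2 := by nlinarith
        nlinarith
      have hfF : f x + ρ ≤ f (F x) := by linarith
      have hmono : min τ (c₁ + ((n:ℝ)+1) * ρ) ≤ min τ (c₁ + (n:ℝ) * ρ) + ρ := by
        rcases le_total τ (c₁ + (n:ℝ)*ρ) with hcm | hcm
        · calc min τ (c₁ + ((n:ℝ)+1)*ρ) ≤ τ := min_le_left _ _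
            _ ≤ min τ (c₁+(n:ℝ)*ρ) + ρ := by rw [min_eq_left hcm]; linarith
        · calc min τ (c₁ + ((n:ℝ)+1)*ρ) ≤ c₁ + ((n:ℝ)+1)*ρ := min_le_right _ _
            _ = c₁ + (n:ℝ)*ρ + ρ := by ring
            _ = min τ (c₁+(n:ℝ)*ρ) + ρ := by rw [min_eq_right hcm]
      linarith
    · push_neg at hcase
      have hgt : (0:ℝ) ≤ t * ‖g x‖^2 / 2 := by positivity
      have : τ ≤ f (F x) := by linarith
      exact le_trans (min_le_left _ _) this
  -- endpoints stay in their component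
  have EP : ∀ (W W' : Set (EuclideanSpace ℝ (Fin d))), IsOpen W → IsOpen W' →
      K ⊆ W ∪ W' → (¬ (K ∩ (W ∩ W')).Nonempty) →
      ∀ x : E, x ∈ K → x ∈ W → F x ∈ K ∧ F x ∈ W := by
    intro W W' hW hW' hKWW' hWempty x hxK hxW
    have hτx : τ ≤ f x := hxK
    have hc₁x : c₁ ≤ f x := le_trans hc₁τ hτx
    set J := (fun s : ℝ => x + (s*t) • g x) '' Set.Icc 0 1 with hJ
    have hJcont : Continuous (fun s : ℝ => x + (s*t) • g x) :=
      continuous_const.add ((continuous_id.mul continuous_const).smul continuous_const)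
    have hJpre : IsPreconnected J := isPreconnected_Icc.image _ hJcont.continuousOn
    have hJK : J ⊆ K := by
      rintro y ⟨s, hs, rfl⟩
      have h1 := KEY x hc₁x (s*t) (mul_nonneg hs.1 htpos.le)
        (by calc s*t ≤ 1*t := mul_le_mul_of_nonneg_right hs.2 htpos.le
              _ = t := one_mul t)
      have h2 : (0:ℝ) ≤ (s*t) * ‖g x‖^2 / 2 :=
        div_nonneg (mul_nonneg (mul_nonneg hs.1 htpos.le) (sq_nonneg _)) (by norm_num)
      show τ ≤ f (x + (s*t) • g x)
      linarith
    have hxJ : x ∈ J := ⟨0, Set.left_mem_Icc.2 zero_le_one, by simp⟩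
    have hFJ : F x ∈ J := ⟨1, Set.right_mem_Icc.2 zero_le_one, by simp [hF]⟩
    have hJW' : ¬ (J ∩ W').Nonempty := by
      rintro ⟨y, hyJ, hyW'⟩
      obtain ⟨z, hzJ, hzW, hzW'⟩ := hJpre W W' hW hW' (fun w hw => hKWW' (hJK hw))
        ⟨x, hxJ, hxW⟩ ⟨y, hyJ, hyW'⟩
      exact hWempty ⟨z, hJK hzJ, hzW, hzW'⟩
    refine ⟨hJK hFJ, ?_⟩
    rcases hKWW' (hJK hFJ) with hin | hin
    · exact hin
    · exact absurd ⟨F x, hFJ, hin⟩ hJW'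
  have hemptyVU : ¬ (K ∩ (V ∩ U)).Nonempty := by
    rintro ⟨z, hz1, hz2, hz3⟩
    exact hempty ⟨z, hz1, hz3, hz2⟩
  have hKVU : K ⊆ V ∪ U := fun w hw => (hKUV hw).elim Or.inr Or.inl
  -- the iterated paths
  set γ : ℕ → ℝ → E := fun n s => F^[n] (seg s) with hγ
  have hInv : ∀ n : ℕ, (∀ s ∈ Set.Icc (0:ℝ) 1, min τ (c₁ + (n:ℝ) * ρ) ≤ f (γ n s))
      ∧ (γ n 0 ∈ K ∧ γ n 0 ∈ U) ∧ (γ n 1 ∈ K ∧ γ n 1 ∈ V) := by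
    intro n
    induction n with
    | zero =>
      have hseg0 : seg 0 = a := by simp [hseg]
      have hseg1 : seg 1 = b := by simp [hseg]
      have hγ0 : ∀ s, γ 0 s = seg s := fun s => rfl
      refine ⟨fun s hs => ?_, ?_, ?_⟩
      · rw [hγ0 s]
        have h1 := hc₀seg s hs
        have h2 : min τ (c₁ + (0:ℕ) * ρ) ≤ c₀ := by
          simp only [Nat.cast_zero, zero_mul, add_zero]
          exact le_trans (min_le_right _ _) hc₁c₀
        calc min τ (c₁ + ((0:ℕ):ℝ) * ρ) ≤ c₀ := h2
          _ ≤ f (seg s) := h1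
      · rw [hγ0 0, hseg0]; exact ⟨haK, haU⟩
      · rw [hγ0 1, hseg1]; exact ⟨hbK, hbV⟩
    | succ n ih =>
      obtain ⟨ihs, ⟨ih0K, ih0U⟩, ⟨ih1K, ih1V⟩⟩ := ih
      have hstep : ∀ s, γ (n+1) s = F (γ n s) := fun s =>
        Function.iterate_succ_apply' F n (seg s)
      refine ⟨fun s hs => ?_, ?_, ?_⟩
      · rw [hstep s]
        have := STEP n _ (ihs s hs)
        have hcast : ((n+1 : ℕ):ℝ) = (n:ℝ) + 1 := by push_cast; ring
        rw [hcast]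
        exact this
      · rw [hstep 0]
        exact EP U V hU hV hKUV hempty (γ n 0) ih0K ih0U
      · rw [hstep 1]
        exact EP V U hV hU hKVU hemptyVU (γ n 1) ih1K ih1V
  -- conclude
  obtain ⟨N, hN⟩ := exists_nat_ge ((τ - c₁)/ρ)
  have hNρ : τ ≤ c₁ + (N:ℝ) * ρ := by
    rw [div_le_iff₀ hρpos] at hN
    linarith
  have hminN : min τ (c₁ + (N:ℝ) * ρ) = τ := min_eq_left hNρ
  obtain ⟨hsN, ⟨h0K, h0U⟩, ⟨h1K, h1V⟩⟩ := hInv N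
  have hγcont : Continuous (γ N) := (hFcont.iterate N).comp hsegcont
  set W := γ N '' Set.Icc 0 1 with hW
  have hWpre : IsPreconnected W := isPreconnected_Icc.image _ hγcont.continuousOn
  have hWK : W ⊆ K := by
    rintro y ⟨s, hs, rfl⟩
    have h1 := hsN s hs
    rw [hminN] at h1
    exact h1
  obtain ⟨z, hzW, hzU, hzV⟩ := hWpre U V hU hV (fun w hw => hKUV (hWK hw))
    ⟨γ N 0, ⟨0, Set.left_mem_Icc.2 zero_le_one, rfl⟩, h0U⟩
    ⟨γ N 1, ⟨1, Set.right_mem_Icc.2 zero_le_one, rfl⟩, h1V⟩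
  exact hempty ⟨z, hWK hzW, hzU, hzV⟩
end chunk8

section main
variable {d k : ℕ}
local notation "E" => EuclideanSpace ℝ (Fin d)


/-- Lemma: a low connected superlevel set for Morse Gaussian mixtures.
If $h$ is a Morse Gaussian mixture density, there is a regular value $τ > 0$ below all
critical values such that $\{h ≥ τ\}$ is compact, connected, and contains all critical
points of $h$. -/
theorem low_superlevel_connected
    {d k : ℕ} (α : Fin k → ℝ) (μ : Fin k → EuclideanSpace ℝ (Fin d))
    (S : Fin k → Matrix (Fin d) (Fin d) ℝ)
    (h : EuclideanSpace ℝ (Fin d) → ℝ)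
    (hmix : IsGaussianMixture h α μ S)
    (hMorse : ∀ x, gradient h x = 0 → (hessianMatrix h x).det ≠ 0) :
    ∃ τ : ℝ, 0 < τ ∧
      (∀ x, gradient h x = 0 → τ < h x) ∧
      (∀ x, h x = τ → gradient h x ≠ 0) ∧
      IsCompact {x : EuclideanSpace ℝ (Fin d) | τ ≤ h x} ∧
      IsConnected {x : EuclideanSpace ℝ (Fin d) | τ ≤ h x} ∧
      {x : EuclideanSpace ℝ (Fin d) | gradient h x = 0} ⊆
        {x : EuclideanSpace ℝ (Fin d) | τ ≤ h x} := by
  obtain ⟨hα, hsum, hS, hfun⟩ := hmix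
  have hfeq : h = mixturePdf α μ S := funext hfun
  subst hfeq
  have hsmooth : ContDiff ℝ (⊤ : ℕ∞) (mixturePdf α μ S) := mixture_contDiff α μ S
  have hpos : ∀ x : EuclideanSpace ℝ (Fin d), 0 < mixturePdf α μ S x := mixture_pos μ hα hsum hS
  have htends := mixture_tendsto_zero α μ hα hS
  obtain ⟨R, hRpos, hcritR⟩ := critical_norm_le hα hsum hS
  have hgcont : Continuous (gradient (mixturePdf α μ S)) :=
    (gradient_contDiff hsmooth).continuous
  set C := {x : EuclideanSpace ℝ (Fin d) | gradient (mixturePdf α μ S) x = 0} with hC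
  have hCclosed : IsClosed C := isClosed_eq hgcont continuous_const
  have hCcomp : IsCompact C := (isCompact_closedBall (0 : EuclideanSpace ℝ (Fin d)) R).of_isClosed_subset hCclosed
    (fun x hx => by
      simpa [Metric.mem_closedBall, dist_zero_right] using hcritR x hx)
  have hCne : C.Nonempty := by
    have hK0 : IsCompact {x : EuclideanSpace ℝ (Fin d) | mixturePdf α μ S 0 ≤ mixturePdf α μ S x} :=
      superlevel_isCompact hsmooth.continuous htends (hpos 0)
    obtain ⟨z, hz, hzmax⟩ := hK0.exists_isMaxOn ⟨0, Set.mem_setOf.2 le_rfl⟩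
      hsmooth.continuous.continuousOn
    have hz' : mixturePdf α μ S 0 ≤ mixturePdf α μ S z := hz
    have hglobal : ∀ y, mixturePdf α μ S y ≤ mixturePdf α μ S z := by
      intro y
      rcases le_total (mixturePdf α μ S 0) (mixturePdf α μ S y) with hy | hy
      · exact hzmax hy
      · exact le_trans hy hz'
    have hlocal : IsLocalMax (mixturePdf α μ S) z := Filter.Eventually.of_forall hglobal
    have hfder : fderiv ℝ (mixturePdf α μ S) z = 0 := hlocal.fderiv_eq_zero
    refine ⟨z, ?_⟩
    show gradient (mixturePdf α μ S) z = 0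
    rw [gradient, hfder, map_zero]
  obtain ⟨w, hwC, hwmin⟩ := hCcomp.exists_isMinOn hCne hsmooth.continuous.continuousOn
  set m := mixturePdf α μ S w with hm
  have hmpos : 0 < m := hpos w
  have hmle : ∀ x : EuclideanSpace ℝ (Fin d), gradient (mixturePdf α μ S) x = 0 → m ≤ mixturePdf α μ S x :=
    fun x hx => hwmin hx
  refine ⟨m/2, by positivity, ?_, ?_, ?_, ?_, ?_⟩
  · intro x hx
    have := hmle x hx
    linarith
  · intro x hxval hgrad
    have := hmle x hgrad
    rw [hxval] at this
    linarith
  · exact superlevel_isCompact hsmooth.continuous htends (by positivity)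
  · refine superlevel_isConnected hα hsum hS (by positivity)
      (show m/2 < (3/4)*m by linarith) ?_ w ?_
    · intro x hx
      have := hmle x hx
      linarith
    · show m/2 ≤ mixturePdf α μ S w
      linarith
  · intro x hx
    have := hmle x hx
    show m/2 ≤ mixturePdf α μ S x
    linarith
end main
end

section
/- Let Φ be a homoscedastic Gaussian mixture density with k components in ℝ^d (Σ_1 = ⋯ = Σ_k = Σ), and let r = dim aff{μ_1, …, μ_k} be the affine rank of the means. Then there exists an invertible affine map T : ℝ^d → ℝ^r × ℝ^{d−r} such that the pushforward density Φ̃(z) = |det DT^{-1}| · Φ(T^{-1}(z)) factors as Φ̃(u,v) = C e^{−‖v‖²/2} G(u) for all (u,v) ∈ ℝ^r × ℝ^{d−r}, where C = (2π)^{−(d−r)/2} and G(u) = (2π)^{−r/2} ∑_{i=1}^k α_i exp(−‖u − m_i‖²/2) is an r-dimensional homoscedastic Gaussian mixture density with k components and identity covariance, for suitable means m_1, …, m_k ∈ ℝ^r. -/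
open scoped BigOperators RealInnerProductSpace
open Matrix

noncomputable def mulVecEquiv {d : ℕ} (A : Matrix (Fin d) (Fin d) ℝ) (hA : A.det ≠ 0) :
    EuclideanSpace ℝ (Fin d) ≃ₗ[ℝ] EuclideanSpace ℝ (Fin d) :=
  LinearEquiv.ofLinear (Matrix.toLpLin 2 2 A) (Matrix.toLpLin 2 2 A⁻¹)
    (by rw [← Matrix.toLpLin_mul_same, Matrix.mul_nonsing_inv A (isUnit_iff_ne_zero.mpr hA),
      Matrix.toLpLin_one])
    (by rw [← Matrix.toLpLin_mul_same, Matrix.nonsing_inv_mul A (isUnit_iff_ne_zero.mpr hA),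
      Matrix.toLpLin_one])

open scoped MatrixOrder in
lemma exists_posdef_sqrt {d : ℕ} (Sig : Matrix (Fin d) (Fin d) ℝ) (h : Sig.PosDef) :
    ∃ B : Matrix (Fin d) (Fin d) ℝ, B * B = Sig ∧ B.IsHermitian ∧ Bᵀ = B ∧ 0 < B.det := by
  have hpsd : (CFC.sqrt Sig).PosSemidef := (CFC.sqrt_nonneg Sig).posSemidef
  have hBsq : CFC.sqrt Sig * CFC.sqrt Sig = Sig := CFC.sqrt_mul_sqrt_self Sig h.posSemidef.nonneg
  refine ⟨CFC.sqrt Sig, hBsq, hpsd.1, ?_, ?_⟩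
  · have := hpsd.1
    rw [Matrix.IsHermitian, Matrix.conjTranspose_eq_transpose_of_trivial] at this
    exact this
  · have h2 : (CFC.sqrt Sig).det * (CFC.sqrt Sig).det = Sig.det := by
      rw [← Matrix.det_mul, hBsq]
    have hSigdet : 0 < Sig.det := h.det_pos
    rcases hpsd.det_nonneg.lt_or_eq with h' | h'
    · exact h'
    · exfalso; rw [← h'] at h2; nlinarith

lemma exists_adapted_onb {d r : ℕ} (hrd : r ≤ d)
    (V : Submodule ℝ (EuclideanSpace ℝ (Fin d))) (hV : Module.finrank ℝ V = r) :
    ∃ b : Fin d → EuclideanSpace ℝ (Fin d), Orthonormal ℝ b ∧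
      ∀ j : Fin d, r ≤ (j : ℕ) → b j ∈ Vᗮ := by
  classical
  have hV' : Module.finrank ℝ (Vᗮ) = d - r := by
    have h := V.finrank_add_finrank_orthogonal
    rw [hV, finrank_euclideanSpace_fin] at h
    omega
  let u : OrthonormalBasis (Fin r) ℝ V := (stdOrthonormalBasis ℝ V).reindex (finCongr hV)
  let w : OrthonormalBasis (Fin (d - r)) ℝ (Vᗮ : Submodule ℝ (EuclideanSpace ℝ (Fin d))) :=
    (stdOrthonormalBasis ℝ _).reindex (finCongr hV')
  have hd : r + (d - r) = d := Nat.add_sub_cancel' hrd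
  let e : Fin r ⊕ Fin (d - r) ≃ Fin d := finSumFinEquiv.trans (finCongr hd)
  set g : Fin r ⊕ Fin (d - r) → EuclideanSpace ℝ (Fin d) :=
    Sum.elim (fun i => (u i : EuclideanSpace ℝ (Fin d)))
      (fun i => (w i : EuclideanSpace ℝ (Fin d))) with hg
  have hong : Orthonormal ℝ g := by
    rw [orthonormal_iff_ite]
    have hu := orthonormal_iff_ite.mp u.orthonormal
    have hw := orthonormal_iff_ite.mp w.orthonormal
    rintro (i | i) (j | j)
    · simpa [hg, Submodule.coe_inner] using hu i j
    · have h0 : (inner ℝ ((u i : EuclideanSpace ℝ (Fin d))) ((w j : EuclideanSpace ℝ (Fin d))) : ℝ) = 0 :=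
        (w j).2 _ (u i).2
      simp only [hg, Sum.elim_inl, Sum.elim_inr]
      rw [if_neg (by simp)]
      exact h0
    · have h0 : (inner ℝ ((u j : EuclideanSpace ℝ (Fin d))) ((w i : EuclideanSpace ℝ (Fin d))) : ℝ) = 0 :=
        (w i).2 _ (u j).2
      simp only [hg, Sum.elim_inl, Sum.elim_inr]
      rw [if_neg (by simp), real_inner_comm]
      exact h0
    · simpa [hg, Submodule.coe_inner] using hw i j
  refine ⟨g ∘ e.symm, hong.comp _ e.symm.injective, ?_⟩
  intro j hj
  have : e.symm j = Sum.inr ⟨(j : ℕ) - r, by omega⟩ := by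
    rw [Equiv.symm_apply_eq]
    simp only [e, Equiv.trans_apply, finSumFinEquiv_apply_right]
    ext
    simp [Fin.natAdd]
    omega
  simp only [Function.comp_apply, this, hg, Sum.elim_inr]
  exact (w _).2

/-- Theorem: affine-rank reduction in the homoscedastic case.
If $Φ$ is homoscedastic with affine rank $r ≥ 1$ of the means, there is an invertible
affine change of variables $T$ (identifying $ℝ^d$ with $ℝ^r × ℝ^{d-r}$ via the first $r$
and last $d-r$ coordinates) such that the pushforward density
$Φ̃(z)=\lvert\det DT^{-1}\rvert Φ(T^{-1}z)$ factors as
$C e^{-‖v‖²/2} G(u)$ with $C=(2π)^{-(d-r)/2}$ and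
$G(u)=(2π)^{-r/2}\sum_i α_i e^{-‖u-m_i‖²/2}$. -/
theorem affine_rank_reduction
    {d k : ℕ}
    (α : Fin k → ℝ) (μ : Fin k → EuclideanSpace ℝ (Fin d))
    (S : Fin k → Matrix (Fin d) (Fin d) ℝ)
    (hhom : ∀ i j, S i = S j)
    (Φ : EuclideanSpace ℝ (Fin d) → ℝ)
    (hΦ : IsGaussianMixture Φ α μ S)
    (r : ℕ)
    (hr : r = Module.finrank ℝ (affineSpan ℝ (Set.range μ)).direction)
    (hr1 : 1 ≤ r) (hrd : r ≤ d) :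
    ∃ (T : EuclideanSpace ℝ (Fin d) ≃ᵃ[ℝ] EuclideanSpace ℝ (Fin d))
      (mmean : Fin k → EuclideanSpace ℝ (Fin r)),
      ∀ z : EuclideanSpace ℝ (Fin d),
        |LinearMap.det
            (T.symm.linear : EuclideanSpace ℝ (Fin d) →ₗ[ℝ] EuclideanSpace ℝ (Fin d))| *
          Φ (T.symm z) =
        (2 * Real.pi) ^ (-((d - r : ℕ) : ℝ) / 2) *
          Real.exp
            (-(∑ j : Fin (d - r),
              (z (Fin.cast (Nat.add_sub_cancel' hrd) (Fin.natAdd r j))) ^ 2) / 2) *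
          ((2 * Real.pi) ^ (-(r : ℝ) / 2) *
            ∑ i, α i *
              Real.exp (-(∑ j : Fin r, (z (Fin.castLE hrd j) - mmean i j) ^ 2) / 2)) := by
  classical
  obtain ⟨hα, hα1, hSpd, hΦx⟩ := hΦ
  have hk : 0 < k := by
    rcases Nat.eq_zero_or_pos k with hk0 | hk
    · exfalso
      subst hk0
      have hre : Set.range μ = ∅ := Set.range_eq_empty μ
      rw [hre] at hr
      rw [AffineSubspace.span_empty, AffineSubspace.direction_bot, finrank_bot] at hr
      omega
    · exact hk
  set i₀ : Fin k := ⟨0, hk⟩ with hi₀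
  set c : EuclideanSpace ℝ (Fin d) := μ i₀ with hc
  set Sig : Matrix (Fin d) (Fin d) ℝ := S i₀ with hSig
  have hSigpd : Sig.PosDef := hSpd i₀
  have hSall : ∀ i, S i = Sig := fun i => hhom i i₀
  obtain ⟨B, hBsq, hBherm, hBT, hdetB⟩ := exists_posdef_sqrt Sig hSigpd
  set eB := mulVecEquiv B hdetB.ne' with heB
  set D := (affineSpan ℝ (Set.range μ)).direction with hD
  set V : Submodule ℝ (EuclideanSpace ℝ (Fin d)) := D.map eB.symm.toLinearMap with hV
  have hVr : Module.finrank ℝ V = r := by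
    rw [hV, LinearEquiv.finrank_map_eq]
    exact hr.symm
  obtain ⟨b, hb, hbV⟩ := exists_adapted_onb hrd V hVr
  set Q : Matrix (Fin d) (Fin d) ℝ := Matrix.of (fun i j => b i j) with hQ
  have hQrow : ∀ (l : Fin d) (y : EuclideanSpace ℝ (Fin d)),
      (Q *ᵥ fun t => y t) l = (inner ℝ (b l) y : ℝ) := by
    intro l y
    simp [hQ, Matrix.mulVec, dotProduct, PiLp.inner_apply, RCLike.inner_apply,
      conj_trivial, mul_comm]
  have hQQt : Q * Qᵀ = 1 := by
    ext i j
    have h := orthonormal_iff_ite.mp hb i j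
    simp only [PiLp.inner_apply, RCLike.inner_apply, conj_trivial] at h
    simpa [hQ, Matrix.mul_apply, Matrix.one_apply, mul_comm] using h
  have hQtQ : Qᵀ * Q = 1 := mul_eq_one_comm.mp hQQt
  have hdetQ : Q.det = 1 ∨ Q.det = -1 := by
    have h := congrArg Matrix.det hQQt
    rw [Matrix.det_mul, Matrix.det_transpose, Matrix.det_one] at h
    exact mul_self_eq_one_iff.mp h
  have hdetQne : Q.det ≠ 0 := by rcases hdetQ with h | h <;> rw [h] <;> norm_num
  set M : Matrix (Fin d) (Fin d) ℝ := Q * B⁻¹ with hM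
  have hdetBinv : B⁻¹.det = B.det⁻¹ := by
    rw [Matrix.det_nonsing_inv, Ring.inverse_eq_inv']
  have hdetM : M.det = Q.det * B.det⁻¹ := by rw [hM, Matrix.det_mul, hdetBinv]
  have hMne : M.det ≠ 0 := by
    rw [hdetM]
    exact mul_ne_zero hdetQne (inv_ne_zero hdetB.ne')
  have hMMinv : M * M⁻¹ = 1 := Matrix.mul_nonsing_inv M (isUnit_iff_ne_zero.mpr hMne)
  have hMinvM : M⁻¹ * M = 1 := Matrix.nonsing_inv_mul M (isUnit_iff_ne_zero.mpr hMne)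
  have hSiginv : Sig⁻¹ = Mᵀ * M := by
    have h1 : Sig⁻¹ = B⁻¹ * B⁻¹ := by rw [← hBsq, Matrix.mul_inv_rev]
    have h2 : (B⁻¹)ᵀ = B⁻¹ := by rw [Matrix.transpose_nonsing_inv, hBT]
    rw [h1, hM, Matrix.transpose_mul, Matrix.mul_assoc, ← Matrix.mul_assoc Qᵀ Q B⁻¹, hQtQ,
      Matrix.one_mul, h2]
  have hquad : ∀ wv : Fin d → ℝ,
      (M⁻¹ *ᵥ wv) ⬝ᵥ (Sig⁻¹ *ᵥ (M⁻¹ *ᵥ wv)) = wv ⬝ᵥ wv := by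
    intro wv
    rw [hSiginv, Matrix.mulVec_mulVec, Matrix.mul_assoc, hMMinv, Matrix.mul_one,
      dotProduct_mulVec, Matrix.vecMul_transpose, Matrix.mulVec_mulVec, hMMinv,
      Matrix.one_mulVec]
  set eM := mulVecEquiv M hMne with heM
  set T : EuclideanSpace ℝ (Fin d) ≃ᵃ[ℝ] EuclideanSpace ℝ (Fin d) :=
    (AffineEquiv.constVAdd ℝ (EuclideanSpace ℝ (Fin d)) (-c)).trans eM.toAffineEquiv with hT
  set mfull : Fin k → (Fin d → ℝ) := fun i => M *ᵥ (fun l => μ i l - c l) with hmfull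
  set mmean : Fin k → EuclideanSpace ℝ (Fin r) :=
    fun i => WithLp.toLp 2 (fun j => mfull i (Fin.castLE hrd j)) with hmmean
  have hd2 : r + (d - r) = d := Nat.add_sub_cancel' hrd
  have hzero : ∀ i (j : Fin (d - r)),
      mfull i (Fin.cast (Nat.add_sub_cancel' hrd) (Fin.natAdd r j)) = 0 := by
    intro i j
    set l : Fin d := Fin.cast (Nat.add_sub_cancel' hrd) (Fin.natAdd r j) with hl
    have hlr : r ≤ (l : ℕ) := by simp [hl, Fin.natAdd]
    have hmem : μ i -ᵥ c ∈ D := by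
      apply AffineSubspace.vsub_mem_direction
      · exact mem_affineSpan ℝ (Set.mem_range_self i)
      · exact mem_affineSpan ℝ (Set.mem_range_self i₀)
    set y : EuclideanSpace ℝ (Fin d) := eB.symm (μ i -ᵥ c) with hy
    have hyV : y ∈ V := Submodule.mem_map_of_mem hmem
    have hsplit : mfull i = Q *ᵥ (fun t => y t) := by
      rw [hmfull]
      show M *ᵥ _ = _
      rw [hM, ← Matrix.mulVec_mulVec]
      rfl
    rw [hsplit, hQrow]
    rw [real_inner_comm]
    exact (hbV l hlr) y hyV
  refine ⟨T, mmean, ?_⟩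
  intro z
  have hTs : T.symm z = c + eM.symm z := by
    have happ : T (c + eM.symm z) = z := by
      show eM ((-c) +ᵥ (c + eM.symm z)) = z
      rw [vadd_eq_add, neg_add_cancel_left, LinearEquiv.apply_symm_apply]
    conv_lhs => rw [← happ]
    rw [AffineEquiv.symm_apply_apply]
  have hx : ∀ j, T.symm z j = c j + (M⁻¹ *ᵥ fun t => z t) j := by
    intro j
    rw [hTs]
    rfl
  have hdetT : |LinearMap.det (T.symm.linear :
      EuclideanSpace ℝ (Fin d) →ₗ[ℝ] EuclideanSpace ℝ (Fin d))| = B.det := by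
    have h2 : LinearMap.det (T.symm.linear :
        EuclideanSpace ℝ (Fin d) →ₗ[ℝ] EuclideanSpace ℝ (Fin d)) = M⁻¹.det :=
      LinearMap.det_toLin (PiLp.basisFun 2 ℝ (Fin d)) _
    rw [h2, Matrix.det_nonsing_inv, Ring.inverse_eq_inv', hdetM, mul_inv, inv_inv]
    rw [abs_mul, abs_of_pos hdetB]
    rcases hdetQ with h | h <;> rw [h] <;> norm_num
  have hdiff : ∀ i, (fun j => T.symm z j - μ i j) = M⁻¹ *ᵥ (fun j => z j - mfull i j) := by
    intro i
    have hminv : M⁻¹ *ᵥ (mfull i) = fun l => μ i l - c l := by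
      rw [hmfull]
      show M⁻¹ *ᵥ (M *ᵥ _) = _
      rw [Matrix.mulVec_mulVec, hMinvM, Matrix.one_mulVec]
    funext j
    have : (fun j => z j - mfull i j) = (fun t => z t) - mfull i := rfl
    rw [this, Matrix.mulVec_sub, hminv]
    simp only [Pi.sub_apply]
    rw [hx j]
    ring
  set e : Fin r ⊕ Fin (d - r) ≃ Fin d := finSumFinEquiv.trans (finCongr hd2) with he
  have hcastl : ∀ j : Fin r, e (Sum.inl j) = Fin.castLE hrd j := by
    intro j
    simp only [he, Equiv.trans_apply, finSumFinEquiv_apply_left, finCongr_apply]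
    ext
    simp
  have hcastr : ∀ j : Fin (d - r),
      e (Sum.inr j) = Fin.cast (Nat.add_sub_cancel' hrd) (Fin.natAdd r j) := by
    intro j
    simp only [he, Equiv.trans_apply, finSumFinEquiv_apply_right, finCongr_apply]
  have hgauss : ∀ i, gaussianPdf (μ i) Sig (T.symm z) =
      ((2 * Real.pi) ^ (-(d : ℝ) / 2) * Sig.det ^ (-(1 : ℝ) / 2)) *
        (Real.exp (-(∑ j : Fin r, (z (Fin.castLE hrd j) - mmean i j) ^ 2) / 2) *
         Real.exp (-(∑ j : Fin (d - r),
           (z (Fin.cast (Nat.add_sub_cancel' hrd) (Fin.natAdd r j))) ^ 2) / 2)) := by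
    intro i
    unfold gaussianPdf
    rw [hdiff i, hquad]
    have hdot : (fun j => z j - mfull i j) ⬝ᵥ (fun j => z j - mfull i j)
        = ∑ j, (z j - mfull i j) ^ 2 := by
      simp [dotProduct, sq]
    rw [hdot]
    have hsum : ∑ j, (z j - mfull i j) ^ 2
        = (∑ j : Fin r, (z (Fin.castLE hrd j) - mmean i j) ^ 2)
          + ∑ j : Fin (d - r),
            (z (Fin.cast (Nat.add_sub_cancel' hrd) (Fin.natAdd r j))) ^ 2 := by
      rw [← Equiv.sum_comp e (fun j => (z j - mfull i j) ^ 2), Fintype.sum_sum_type]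
      congr 1
      apply Finset.sum_congr rfl
      intro j _
      rw [hcastr j, hzero i j, sub_zero]
    rw [hsum, Fintype.card_fin]
    rw [show -(1 / 2 : ℝ) * ((∑ j : Fin r, (z (Fin.castLE hrd j) - mmean i j) ^ 2)
          + ∑ j : Fin (d - r),
            (z (Fin.cast (Nat.add_sub_cancel' hrd) (Fin.natAdd r j))) ^ 2)
        = (-(∑ j : Fin r, (z (Fin.castLE hrd j) - mmean i j) ^ 2) / 2)
          + (-(∑ j : Fin (d - r),
            (z (Fin.cast (Nat.add_sub_cancel' hrd) (Fin.natAdd r j))) ^ 2) / 2) by ring,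
      Real.exp_add]
  have hpref : B.det * ((2 * Real.pi) ^ (-(d : ℝ) / 2) * Sig.det ^ (-(1 : ℝ) / 2))
      = (2 * Real.pi) ^ (-((d - r : ℕ) : ℝ) / 2) * (2 * Real.pi) ^ (-(r : ℝ) / 2) := by
    have h2pi : (0 : ℝ) < 2 * Real.pi := by positivity
    have hSigdet : Sig.det = B.det ^ 2 := by rw [← hBsq, Matrix.det_mul, sq]
    have hdet : Sig.det ^ (-(1 : ℝ) / 2) = B.det⁻¹ := by
      rw [hSigdet, ← Real.rpow_natCast B.det 2, ← Real.rpow_mul hdetB.le]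
      norm_num
      exact (Real.rpow_neg_one B.det).trans rfl
    rw [hdet, ← Real.rpow_add h2pi]
    have : (-((d - r : ℕ) : ℝ) / 2) + (-(r : ℝ) / 2) = -(d : ℝ) / 2 := by
      rw [Nat.cast_sub hrd]
      ring
    rw [this]
    field_simp
  rw [hΦx (T.symm z)]
  unfold mixturePdf
  simp only [hSall]
  rw [hdetT]
  have hsum2 : ∑ i, α i * gaussianPdf (μ i) Sig (T.symm z)
      = (∑ i, α i * Real.exp (-(∑ j : Fin r, (z (Fin.castLE hrd j) - mmean i j) ^ 2) / 2))
        * (((2 * Real.pi) ^ (-(d : ℝ) / 2) * Sig.det ^ (-(1 : ℝ) / 2)) *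
          Real.exp (-(∑ j : Fin (d - r),
            (z (Fin.cast (Nat.add_sub_cancel' hrd) (Fin.natAdd r j))) ^ 2) / 2)) := by
    rw [Finset.sum_mul]
    apply Finset.sum_congr rfl
    intro i _
    rw [hgauss i]
    ring
  rw [hsum2]
  linear_combination ((∑ i, α i * Real.exp (-(∑ j : Fin r,
      (z (Fin.castLE hrd j) - mmean i j) ^ 2) / 2))
    * Real.exp (-(∑ j : Fin (d - r),
        (z (Fin.cast (Nat.add_sub_cancel' hrd) (Fin.natAdd r j))) ^ 2) / 2)) * hpref
end
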